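/- arXiv:1802.04621 — 7 statements merged into one kernel-verified Lean document; each statement's English description precedes it below -/
import Mathlib

section
/- Let F_n(x,a) = P(S_n = x and M_n = a) for integers 0 ≤ x ≤ a, with the convention that F_n(x,a) = 0 if x < 0 or a < 0 or x > a. Then F_1(x,a) = p·δ_{x,1}δ_{a,1} + q·δ_{x,0}δ_{a,0}, and for every n ≥ 2 and 0 ≤ x ≤ a: if n is odd, F_n(x,a) = p·δ_{x,a}·F_{n-1}(x-1,a-1) + p·F_{n-1}(x-1,a) + q·F_{n-1}(x,a); if n is even, F_n(x,a) = (p + q·δ_{x,0})·F_{n-1}(x,a) + q·(1 - δ_{x,a})·F_{n-1}(x+1,a). Here δ denotes the Kronecker delta. -/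
/-!
Write `Zₙ = (Sₙ, Mₙ)`, so that `Zₙ = walkStep Zₙ₋₁ Xₙ`. Being a function of `X₁, …, Xₙ₋₁`, `Zₙ₋₁` is
independent of `Xₙ`, and `Xₙ` takes only two values `v, w`; hence
`P(Zₙ = (x, a)) = P(Xₙ = v) P(walkStep Zₙ₋₁ v = (x, a)) + P(Xₙ = w) P(walkStep Zₙ₋₁ w = (x, a))`.
The recurrences follow by solving `walkStep z v = (x, a)` for `z` among the reachable states
`walkStates`.
-/

open MeasureTheory ProbabilityTheory

section TwoValuedConditioning

variable {Ω α β γ : Type*} {mΩ : MeasurableSpace Ω} {μ : Measure Ω}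

theorem measureReal_setOf_const [IsProbabilityMeasure μ] (P : Prop) [Decidable P] :
    μ.real {_ω : Ω | P} = if P then 1 else 0 := by
  split_ifs with h <;> simp [h]

theorem measureReal_setOf_eq_or_and [IsFiniteMeasure μ] [MeasurableSpace α]
    [MeasurableSingletonClass α] {Z : Ω → α} (hZ : Measurable Z) {z₁ z₂ : α} (h : z₁ ≠ z₂)
    (c : Prop) [Decidable c] :
    μ.real {ω | Z ω = z₁ ∨ c ∧ Z ω = z₂} =
      μ.real {ω | Z ω = z₁} + if c then μ.real {ω | Z ω = z₂} else 0 := by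
  by_cases hc : c
  · simp only [hc, true_and, if_true, Set.ofPred_or]
    refine measureReal_union ?_ (hZ (measurableSet_singleton z₂))
    exact Set.disjoint_left.2 fun ω h₁ h₂ => h (h₁.symm.trans h₂)
  · simp [hc]

theorem measureReal_setOf_eq_eq_zero_of_notMem {Z : Ω → α} {s : Set α} (hZ : ∀ ω, Z ω ∈ s) {z : α}
    (hz : z ∉ s) : μ.real {ω | Z ω = z} = 0 := by
  rw [show {ω | Z ω = z} = ∅ from Set.eq_empty_of_forall_notMem fun ω h => hz (h ▸ hZ ω),
    measureReal_empty]

theorem measureReal_eq_add_of_two_values [IsProbabilityMeasure μ] [MeasurableSpace β]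
    [MeasurableSingletonClass β] {Y : Ω → β} (hY : Measurable Y) {v w : β} (hvw : v ≠ w)
    (hsum : μ {ω | Y ω = v} + μ {ω | Y ω = w} = 1) (E : Set Ω) :
    μ.real E = μ.real (E ∩ {ω | Y ω = v}) + μ.real (E ∩ {ω | Y ω = w}) := by
  set V := {ω | Y ω = v}
  set W := {ω | Y ω = w}
  have hV : MeasurableSet V := hY (measurableSet_singleton v)
  have hW : MeasurableSet W := hY (measurableSet_singleton w)
  have hVW : Disjoint V W := Set.disjoint_left.2 fun ω h₁ h₂ => hvw (h₁.symm.trans h₂)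
  have hconull : μ (V ∪ W)ᶜ = 0 := by
    rw [prob_compl_eq_zero_iff (hV.union hW), measure_union hVW hW, hsum]
  have hVpart : E ∩ (V ∪ W) ∩ V = E ∩ V := by
    rw [Set.inter_assoc, Set.union_inter_cancel_left]
  have hWpart : (E ∩ (V ∪ W)) \ V = E ∩ W := by
    ext ω
    simp only [Set.mem_sdiff, Set.mem_inter_iff, Set.mem_union]
    exact ⟨fun ⟨⟨hE, h⟩, hnV⟩ => ⟨hE, h.resolve_left hnV⟩,
      fun ⟨hE, hωW⟩ => ⟨⟨hE, Or.inr hωW⟩, Set.disjoint_right.1 hVW hωW⟩⟩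
  rw [← hVpart, ← hWpart, measureReal_inter_add_sdiff hV, measureReal_def, measureReal_def,
    measure_inter_conull hconull]

theorem ProbabilityTheory.IndepFun.measureReal_eq_of_two_values [IsProbabilityMeasure μ]
    [MeasurableSpace α] [MeasurableSpace β] [MeasurableSingletonClass β] [MeasurableSpace γ]
    [MeasurableSingletonClass γ] {Z : Ω → α} {Y : Ω → β} (hZY : IndepFun Z Y μ)
    (hY : Measurable Y) {v w : β} (hvw : v ≠ w) (hsum : μ {ω | Y ω = v} + μ {ω | Y ω = w} = 1)
    {g : α → β → γ} (hg : ∀ y, Measurable (g · y)) (c : γ) :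
    μ.real {ω | g (Z ω) (Y ω) = c} =
      μ.real {ω | g (Z ω) v = c} * μ.real {ω | Y ω = v} +
        μ.real {ω | g (Z ω) w = c} * μ.real {ω | Y ω = w} := by
  have hcond (y : β) : μ.real ({ω | g (Z ω) (Y ω) = c} ∩ {ω | Y ω = y}) =
      μ.real {ω | g (Z ω) y = c} * μ.real {ω | Y ω = y} := by
    have hset :
        {ω | g (Z ω) (Y ω) = c} ∩ {ω | Y ω = y} = Z ⁻¹' ((g · y) ⁻¹' {c}) ∩ Y ⁻¹' {y} := by
      ext ω
      simp only [Set.mem_inter_iff, Set.mem_ofPred_eq, Set.mem_preimage, Set.mem_singleton_iff]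
      constructor <;> rintro ⟨h, rfl⟩ <;> exact ⟨h, rfl⟩
    simp only [hset, measureReal_def, ← ENNReal.toReal_mul]
    rw [hZY.measure_inter_preimage_eq_mul _ _ (hg y (measurableSet_singleton c))
      (measurableSet_singleton y)]
    rfl
  rw [measureReal_eq_add_of_two_values hY hvw hsum, hcond, hcond]

end TwoValuedConditioning

section Recursion

variable {Ω α β : Type*} {mΩ : MeasurableSpace Ω} [mα : MeasurableSpace α]
  [mβ : MeasurableSpace β] {X : ℕ → Ω → β} {Z : ℕ → Ω → α} {f : α → β → α} {z₀ : α}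

theorem measurable_iSup_comap_of_recursion (hf : Measurable (Function.uncurry f))
    (hZ0 : ∀ ω, Z 0 ω = z₀) (hZ : ∀ n ω, Z (n + 1) ω = f (Z n ω) (X (n + 1) ω)) (n : ℕ) :
    Measurable[⨆ i ∈ Set.Iic n, mβ.comap (X i)] (Z n) := by
  induction n with
  | zero =>
    rw [funext hZ0]
    exact measurable_const
  | succ n ih =>
    have hmono : ⨆ i ∈ Set.Iic n, mβ.comap (X i) ≤ ⨆ i ∈ Set.Iic (n + 1), mβ.comap (X i) :=
      biSup_mono fun i hi => Set.mem_Iic.2 (Nat.le_succ_of_le hi)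
    have hX : Measurable[⨆ i ∈ Set.Iic (n + 1), mβ.comap (X i)] (X (n + 1)) :=
      (comap_measurable (X (n + 1))).mono
        (le_iSup₂ (f := fun i (_ : i ∈ Set.Iic (n + 1)) => mβ.comap (X i)) (n + 1)
          (Set.mem_Iic.2 le_rfl)) le_rfl
    rw [funext (hZ n)]
    exact hf.comp ((ih.mono hmono le_rfl).prodMk hX)

theorem measurable_of_recursion (hX : ∀ i, Measurable (X i))
    (hf : Measurable (Function.uncurry f)) (hZ0 : ∀ ω, Z 0 ω = z₀)
    (hZ : ∀ n ω, Z (n + 1) ω = f (Z n ω) (X (n + 1) ω)) (n : ℕ) :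
    Measurable (Z n) :=
  (measurable_iSup_comap_of_recursion hf hZ0 hZ n).mono
    (iSup₂_le fun i _ => (hX i).comap_le) le_rfl

theorem indepFun_of_recursion {μ : Measure Ω} (hX : ∀ i, Measurable (X i))
    (hindep : iIndepFun X μ) (hf : Measurable (Function.uncurry f)) (hZ0 : ∀ ω, Z 0 ω = z₀)
    (hZ : ∀ n ω, Z (n + 1) ω = f (Z n ω) (X (n + 1) ω)) (n : ℕ) :
    IndepFun (Z n) (X (n + 1)) μ := by
  have h := indep_iSup_of_disjoint (fun i => (hX i).comap_le)
    ((iIndepFun_iff_iIndep _ _ _).1 hindep) (S := Set.Iic n) (T := {n + 1}) (by simp)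
  rw [IndepFun_iff_Indep]
  refine indep_of_indep_of_le_right (indep_of_indep_of_le_left h
    (measurable_iSup_comap_of_recursion hf hZ0 hZ n).comap_le) ?_
  exact le_iSup₂ (f := fun i (_ : i ∈ ({n + 1} : Set ℕ)) => mβ.comap (X i)) (n + 1) rfl

theorem measureReal_succ_of_recursion {μ : Measure Ω} [IsProbabilityMeasure μ]
    [MeasurableSingletonClass α] [MeasurableSingletonClass β] (hX : ∀ i, Measurable (X i))
    (hindep : iIndepFun X μ) (hf : Measurable (Function.uncurry f)) (hZ0 : ∀ ω, Z 0 ω = z₀)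
    (hZ : ∀ n ω, Z (n + 1) ω = f (Z n ω) (X (n + 1) ω)) (n : ℕ) {v w : β} (hvw : v ≠ w)
    {r s : ℝ} (hr : 0 ≤ r) (hs : 0 ≤ s) (hrs : r + s = 1)
    (hv : μ {ω | X (n + 1) ω = v} = .ofReal r) (hw : μ {ω | X (n + 1) ω = w} = .ofReal s)
    (c : α) :
    μ.real {ω | Z (n + 1) ω = c} =
      r * μ.real {ω | f (Z n ω) v = c} + s * μ.real {ω | f (Z n ω) w = c} := by
  have hsum : μ {ω | X (n + 1) ω = v} + μ {ω | X (n + 1) ω = w} = 1 := by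
    rw [hv, hw, ← ENNReal.ofReal_add hr hs, hrs, ENNReal.ofReal_one]
  simp only [hZ n]
  rw [(indepFun_of_recursion hX hindep hf hZ0 hZ n).measureReal_eq_of_two_values (g := f)
      (hX _) hvw hsum (fun _ => hf.comp (measurable_id.prodMk measurable_const)) c,
    measureReal_def μ {ω | X (n + 1) ω = v}, measureReal_def μ {ω | X (n + 1) ω = w}, hv, hw,
    ENNReal.toReal_ofReal hr, ENNReal.toReal_ofReal hs]
  ring

end Recursion

def walkStep (z : ℤ × ℤ) (v : ℤ) : ℤ × ℤ :=
  (max (z.1 + v) 0, max z.2 (max (z.1 + v) 0))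

def walkStates : Set (ℤ × ℤ) := {z | 0 ≤ z.1 ∧ z.1 ≤ z.2}

section WalkStep

variable {z : ℤ × ℤ} {x a : ℤ}

theorem measurable_walkStep : Measurable (Function.uncurry walkStep) := .of_discrete

theorem walkStep_mem_walkStates (z : ℤ × ℤ) (v : ℤ) : walkStep z v ∈ walkStates :=
  ⟨le_max_right _ _, le_max_right _ _⟩

theorem walkStep_zero (hz : z ∈ walkStates) : walkStep z 0 = z := by
  obtain ⟨s, m⟩ := z
  simp only [walkStates, walkStep, Set.mem_ofPred_eq, Prod.mk.injEq] at *
  omega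

theorem walkStep_one_eq_iff (hz : z ∈ walkStates) (hxa : x ≤ a) :
    walkStep z 1 = (x, a) ↔ z = (x - 1, a) ∨ x = a ∧ z = (x - 1, a - 1) := by
  obtain ⟨s, m⟩ := z
  simp only [walkStates, walkStep, Set.mem_ofPred_eq, Prod.mk.injEq] at *
  omega

theorem walkStep_neg_one_eq_iff (hz : z ∈ walkStates) (hx : 0 ≤ x) :
    walkStep z (-1) = (x, a) ↔ z = (x + 1, a) ∨ x = 0 ∧ z = (x, a) := by
  obtain ⟨s, m⟩ := z
  simp only [walkStates, walkStep, Set.mem_ofPred_eq, Prod.mk.injEq] at *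
  omega

variable {Ω : Type*} {mΩ : MeasurableSpace Ω} {μ : Measure Ω} {Z : Ω → ℤ × ℤ}

theorem measureReal_walkStep_zero (hZ : ∀ ω, Z ω ∈ walkStates) (c : ℤ × ℤ) :
    μ.real {ω | walkStep (Z ω) 0 = c} = μ.real {ω | Z ω = c} := by
  simp only [walkStep_zero (hZ _)]

theorem measureReal_walkStep_one [IsFiniteMeasure μ] (hZmeas : Measurable Z)
    (hZ : ∀ ω, Z ω ∈ walkStates) (hxa : x ≤ a) :
    μ.real {ω | walkStep (Z ω) 1 = (x, a)} =
      μ.real {ω | Z ω = (x - 1, a)} + if x = a then μ.real {ω | Z ω = (x - 1, a - 1)} else 0 := by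
  simp only [walkStep_one_eq_iff (hZ _) hxa]
  exact measureReal_setOf_eq_or_and hZmeas (by simp only [ne_eq, Prod.mk.injEq]; omega) _

theorem measureReal_walkStep_neg_one [IsFiniteMeasure μ] (hZmeas : Measurable Z)
    (hZ : ∀ ω, Z ω ∈ walkStates) (hx : 0 ≤ x) :
    μ.real {ω | walkStep (Z ω) (-1) = (x, a)} =
      (if x = a then 0 else μ.real {ω | Z ω = (x + 1, a)}) +
        if x = 0 then μ.real {ω | Z ω = (x, a)} else 0 := by
  simp only [walkStep_neg_one_eq_iff (hZ _) hx]
  rw [measureReal_setOf_eq_or_and hZmeas (by simp) _]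
  congr 1
  split_ifs with hxa
  · exact measureReal_setOf_eq_eq_zero_of_notMem hZ (by simp [walkStates, hxa])
  · rfl

end WalkStep

/-- For the ℓ = 1 (RG-cycle) reflected traffic walk with Bernoulli(p)
arrivals, the joint law `F n x a = P(S_n = x ∧ M_n = a)` satisfies the stated initial
condition and the odd/even one-step recurrences. -/
theorem maxQueue_F_recurrence
    (p q : ℝ) (hp : 0 < p) (hpq : p ≤ 1 / 2) (hq : q = 1 - p)
    {Ω : Type*} [MeasurableSpace Ω] (μ : Measure Ω) [IsProbabilityMeasure μ]
    (X : ℕ → Ω → ℤ) (hXmeas : ∀ i, Measurable (X i))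
    (hXindep : iIndepFun X μ)
    (hXodd : ∀ i : ℕ, Odd i →
      μ {ω | X i ω = 1} = ENNReal.ofReal p ∧ μ {ω | X i ω = 0} = ENNReal.ofReal q)
    (hXeven : ∀ i : ℕ, 1 ≤ i → Even i →
      μ {ω | X i ω = 0} = ENNReal.ofReal p ∧ μ {ω | X i ω = -1} = ENNReal.ofReal q)
    (S : ℕ → Ω → ℤ) (hS0 : ∀ ω, S 0 ω = 0)
    (hS : ∀ (j : ℕ) (ω : Ω), S (j + 1) ω = max (S j ω + X (j + 1) ω) 0)
    (M : ℕ → Ω → ℤ) (hM0 : ∀ ω, M 0 ω = S 0 ω)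
    (hM : ∀ (n : ℕ) (ω : Ω), M (n + 1) ω = max (M n ω) (S (n + 1) ω))
    (F : ℕ → ℤ → ℤ → ℝ)
    (hF : ∀ (n : ℕ) (x a : ℤ), F n x a = (μ {ω | S n ω = x ∧ M n ω = a}).toReal) :
    (∀ x a : ℤ,
      F 1 x a = p * (if x = 1 then (1 : ℝ) else 0) * (if a = 1 then (1 : ℝ) else 0)
        + q * (if x = 0 then (1 : ℝ) else 0) * (if a = 0 then (1 : ℝ) else 0)) ∧
    (∀ n : ℕ, 2 ≤ n → ∀ x a : ℤ, 0 ≤ x → x ≤ a →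
      (Odd n →
        F n x a = p * (if x = a then (1 : ℝ) else 0) * F (n - 1) (x - 1) (a - 1)
          + p * F (n - 1) (x - 1) a + q * F (n - 1) x a) ∧
      (Even n →
        F n x a = (p + q * (if x = 0 then (1 : ℝ) else 0)) * F (n - 1) x a
          + q * (1 - (if x = a then (1 : ℝ) else 0)) * F (n - 1) (x + 1) a)) := by
  have hq0 : 0 ≤ q := by linarith
  have hpq1 : p + q = 1 := by linarith
  set Z : ℕ → Ω → ℤ × ℤ := fun n ω => (S n ω, M n ω)
  have hZ0 (ω : Ω) : Z 0 ω = (0, 0) := by simp [Z, hM0, hS0]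
  have hZ (n : ℕ) (ω : Ω) : Z (n + 1) ω = walkStep (Z n ω) (X (n + 1) ω) := by
    simp [Z, walkStep, hS, hM]
  have hZmeas := measurable_of_recursion hXmeas measurable_walkStep hZ0 hZ
  have hZmem (n : ℕ) (ω : Ω) : Z n ω ∈ walkStates := by
    cases n with
    | zero => simp [hZ0, walkStates]
    | succ n => exact hZ n ω ▸ walkStep_mem_walkStates _ _
  have hF' (n : ℕ) (x a : ℤ) : F n x a = μ.real {ω | Z n ω = (x, a)} := by
    simp [hF, Z, measureReal_def]
  have hstep (n : ℕ) {v w : ℤ} (hvw : v ≠ w)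
      (hX : μ {ω | X (n + 1) ω = v} = .ofReal p ∧ μ {ω | X (n + 1) ω = w} = .ofReal q) (x a : ℤ) :=
    (hF' (n + 1) x a).trans <| measureReal_succ_of_recursion hXmeas hXindep measurable_walkStep
      hZ0 hZ n hvw hp.le hq0 hpq1 hX.1 hX.2 (x, a)
  refine ⟨fun x a => ?_, fun n hn x a hx hxa => ?_⟩
  · rw [hstep 0 one_ne_zero (hXodd 1 odd_one)]
    simp only [hZ0, show walkStep (0, 0) 1 = (1, 1) from rfl,
      show walkStep (0, 0) 0 = (0, 0) from rfl, Prod.mk.injEq, measureReal_setOf_const, ite_and,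
      eq_comm (a := (1 : ℤ)), eq_comm (a := (0 : ℤ))]
    split_ifs <;> ring
  obtain ⟨m, rfl⟩ : ∃ m, n = m + 1 := ⟨n - 1, by omega⟩
  rw [Nat.add_sub_cancel]
  refine ⟨fun hodd => ?_, fun heven => ?_⟩
  · rw [hstep m one_ne_zero (hXodd _ hodd), measureReal_walkStep_one (hZmeas m) (hZmem m) hxa,
      measureReal_walkStep_zero (hZmem m)]
    simp only [hF']
    split_ifs <;> ring
  · rw [hstep m (by norm_num) (hXeven _ (Nat.le_add_left 1 m) heven),
      measureReal_walkStep_zero (hZmem m), measureReal_walkStep_neg_one (hZmeas m) (hZmem m) hx]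
    simp only [hF']
    split_ifs <;> ring
end

section
/- Let F_n(x,a) = P(S_n = x and M_n = a) for integers 0 ≤ x ≤ a, with the convention that F_n(x,a) = 0 if x < 0 or a < 0 or x > a. Then for every even n ≥ 2, every a ≥ 1 and every 0 ≤ x ≤ a: F_n(x,a) = p·δ_{x,a}·(p + q·δ_{x,0})·F_{n-2}(x-1,a-1) + p·(p + q·δ_{x,0})·F_{n-2}(x-1,a) + p·q·δ_{x+1,a}·(1 - δ_{x,a})·F_{n-2}(x,a-1) + q·[(p + q·δ_{x,0}) + p·(1 - δ_{x,a})]·F_{n-2}(x,a) + q²·(1 - δ_{x,a})·F_{n-2}(x+1,a), where F_0(x,a) = δ_{x,0}δ_{a,0} and δ denotes the Kronecker delta. -/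
/-!
Conditioning on the increment `X (j + 1)`, which is independent of `(S j, M j)` because the
latter is a function of `X 0, …, X j`, gives a one-step recursion for the joint law of
`(S j, M j)` whose shape depends on the colour of the light at time `j + 1`. The two-step
formula is a green step (increment `1` or `0`) followed by a red step (increment `0` or `-1`);
the states with `S > M`, which the walk never visits, carry no mass.
-/

open MeasureTheory ProbabilityTheory

section TwoValued

variable {Ω α β : Type*} [MeasurableSpace Ω] {μ : Measure Ω}

theorem measureReal_eq_add_inter_of_add_eq_one [IsProbabilityMeasure μ] [MeasurableSpace β]
    [MeasurableSingletonClass β] {Y : Ω → β} (hY : Measurable Y) {u v : β} (huv : u ≠ v)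
    (hsum : μ.real {ω | Y ω = u} + μ.real {ω | Y ω = v} = 1) (E : Set Ω) :
    μ.real E = μ.real (E ∩ {ω | Y ω = u}) + μ.real (E ∩ {ω | Y ω = v}) := by
  have hu : MeasurableSet {ω | Y ω = u} := hY (measurableSet_singleton u)
  have hv : MeasurableSet {ω | Y ω = v} := hY (measurableSet_singleton v)
  have hdisj : Disjoint {ω | Y ω = u} {ω | Y ω = v} :=
    Set.disjoint_left.mpr fun ω hωu hωv => huv (hωu.symm.trans hωv)
  have hnull : μ ({ω | Y ω = u} ∪ {ω | Y ω = v})ᶜ = 0 := by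
    rw [← measureReal_eq_zero_iff, measureReal_compl (hu.union hv), measureReal_union hdisj hv,
      hsum, probReal_univ, sub_self]
  have hdiff :
      E \ {ω | Y ω = u} ∩ ({ω | Y ω = u} ∪ {ω | Y ω = v}) = E ∩ {ω | Y ω = v} := by
    ext ω
    simp only [Set.mem_inter_iff, Set.mem_sdiff, Set.mem_union, Set.mem_ofPred_eq]
    grind
  rw [← measureReal_inter_add_sdiff hu (s := E), ← hdiff]
  exact congrArg _ (congrArg ENNReal.toReal (measure_inter_conull hnull).symm)

theorem ProbabilityTheory.IndepFun.measureReal_comp_eq_of_add_eq_one [IsProbabilityMeasure μ]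
    [MeasurableSpace α] [DiscreteMeasurableSpace α] [MeasurableSpace β]
    [MeasurableSingletonClass β] {γ : Type*} {Z : Ω → α} {Y : Ω → β}
    (hY : Measurable Y) (hind : IndepFun Z Y μ) {u v : β} (huv : u ≠ v)
    (hsum : μ.real {ω | Y ω = u} + μ.real {ω | Y ω = v} = 1) (f : β → α → γ) (c : γ) :
    μ.real {ω | f (Y ω) (Z ω) = c} =
      μ.real {ω | f u (Z ω) = c} * μ.real {ω | Y ω = u}
        + μ.real {ω | f v (Z ω) = c} * μ.real {ω | Y ω = v} := by
  have hslice : ∀ w, μ.real ({ω | f (Y ω) (Z ω) = c} ∩ {ω | Y ω = w})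
      = μ.real {ω | f w (Z ω) = c} * μ.real {ω | Y ω = w} := fun w => by
    have hset : {ω | f (Y ω) (Z ω) = c} ∩ {ω | Y ω = w} =
        Z ⁻¹' (f w ⁻¹' {c}) ∩ Y ⁻¹' {w} := by
      ext ω
      simp only [Set.mem_inter_iff, Set.mem_ofPred_eq, Set.mem_preimage, Set.mem_singleton_iff]
      constructor <;> rintro ⟨h, rfl⟩ <;> exact ⟨h, rfl⟩
    rw [hset, Measure.real, hind.measure_inter_preimage_eq_mul _ _ MeasurableSet.of_discrete
      (measurableSet_singleton w), ENNReal.toReal_mul]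
    rfl
  rw [measureReal_eq_add_inter_of_add_eq_one hY huv hsum, hslice, hslice]

theorem measureReal_eq_or_and_eq [IsFiniteMeasure μ] [MeasurableSpace α]
    [MeasurableSingletonClass α] {Z : Ω → α} (hZ : Measurable Z) {z₁ z₂ : α}
    (hz : z₁ ≠ z₂) (P : Prop) [Decidable P] :
    μ.real {ω | Z ω = z₁ ∨ (P ∧ Z ω = z₂)} =
      μ.real {ω | Z ω = z₁} + if P then μ.real {ω | Z ω = z₂} else 0 := by
  by_cases hP : P
  · simp only [hP, true_and, if_true, Set.ofPred_or]
    refine measureReal_union (Set.disjoint_left.mpr fun ω h₁ h₂ => hz ?_)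
      (hZ (measurableSet_singleton z₂))
    exact h₁.symm.trans h₂
  · simp [hP]

end TwoValued

theorem ProbabilityTheory.iIndepFun.indepFun_succ_of_measurable_iSup {Ω β γ : Type*}
    [MeasurableSpace Ω] {μ : Measure Ω} [mβ : MeasurableSpace β] [MeasurableSpace γ]
    {X : ℕ → Ω → β} (hX : ∀ i, Measurable (X i)) (hind : iIndepFun X μ) {j : ℕ}
    {Z : Ω → γ} (hZ : Measurable[⨆ i ≤ j, mβ.comap (X i)] Z) :
    IndepFun Z (X (j + 1)) μ := by
  have hpast := indep_iSup_of_disjoint (fun i => (hX i).comap_le) hind.iIndep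
    (S := Set.Iic j) (T := {j + 1}) (by simp)
  rw [iSup_singleton] at hpast
  exact (IndepFun_iff_Indep _ _ _).mpr (indep_of_indep_of_le_left hpast hZ.comap_le)

def reflectStep (u : ℤ) (z : ℤ × ℤ) : ℤ × ℤ :=
  (max (z.1 + u) 0, max z.2 (max (z.1 + u) 0))

section ReflectStep

variable {s m x a : ℤ}

theorem reflectStep_zero (hs : 0 ≤ s) (hsm : s ≤ m) : reflectStep 0 (s, m) = (s, m) := by
  simp only [reflectStep, Prod.mk.injEq]
  omega

theorem reflectStep_one_eq_iff (hs : 0 ≤ s) (hsm : s ≤ m) (hxa : x ≤ a) :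
    reflectStep 1 (s, m) = (x, a) ↔
      (s, m) = (x - 1, a) ∨ (x = a ∧ (s, m) = (x - 1, a - 1)) := by
  simp only [reflectStep, Prod.mk.injEq]
  omega

theorem reflectStep_neg_one_eq_iff (hs : 0 ≤ s) (hsm : s ≤ m) (hx : 0 ≤ x) :
    reflectStep (-1) (s, m) = (x, a) ↔ (s, m) = (x + 1, a) ∨ (x = 0 ∧ (s, m) = (0, a)) := by
  simp only [reflectStep, Prod.mk.injEq]
  omega

end ReflectStep

structure IsReflectedWalk {Ω : Type*} (X S M : ℕ → Ω → ℤ) : Prop where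
  S_zero : ∀ ω, S 0 ω = 0
  S_succ : ∀ j ω, S (j + 1) ω = max (S j ω + X (j + 1) ω) 0
  M_zero : ∀ ω, M 0 ω = S 0 ω
  M_succ : ∀ j ω, M (j + 1) ω = max (M j ω) (S (j + 1) ω)

noncomputable def jointLaw {Ω : Type*} [MeasurableSpace Ω] (μ : Measure Ω)
    (S M : ℕ → Ω → ℤ) (j : ℕ) (x a : ℤ) : ℝ :=
  μ.real {ω | S j ω = x ∧ M j ω = a}

namespace IsReflectedWalk

variable {Ω : Type*} {X S M : ℕ → Ω → ℤ}

theorem S_nonneg (hw : IsReflectedWalk X S M) (j : ℕ) (ω : Ω) : 0 ≤ S j ω := by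
  cases j with
  | zero => exact (hw.S_zero ω).ge
  | succ j => exact (hw.S_succ j ω).symm ▸ le_max_right _ _

theorem S_le_M (hw : IsReflectedWalk X S M) (j : ℕ) (ω : Ω) : S j ω ≤ M j ω := by
  cases j with
  | zero => exact (hw.M_zero ω).ge
  | succ j => exact (hw.M_succ j ω).symm ▸ le_max_right _ _

theorem succ_eq_reflectStep (hw : IsReflectedWalk X S M) (j : ℕ) (ω : Ω) :
    (S (j + 1) ω, M (j + 1) ω) = reflectStep (X (j + 1) ω) (S j ω, M j ω) := by
  rw [hw.M_succ, hw.S_succ]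
  rfl

theorem setOf_reflectStep_zero_eq (hw : IsReflectedWalk X S M) (j : ℕ) (z : ℤ × ℤ) :
    {ω | reflectStep 0 (S j ω, M j ω) = z} = {ω | (S j ω, M j ω) = z} := by
  ext ω
  rw [Set.mem_ofPred_eq, reflectStep_zero (hw.S_nonneg j ω) (hw.S_le_M j ω)]
  rfl

theorem measurable_of_monotone (hw : IsReflectedWalk X S M) {𝓕 : ℕ → MeasurableSpace Ω}
    (h𝓕 : Monotone 𝓕) (hX : ∀ i, Measurable[𝓕 i] (X i)) (j : ℕ) :
    Measurable[𝓕 j] fun ω => (S j ω, M j ω) := by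
  induction j with
  | zero =>
    have hS : S 0 = fun _ => 0 := funext hw.S_zero
    have hM : M 0 = S 0 := funext hw.M_zero
    rw [hM, hS]
    exact measurable_const
  | succ j ih =>
    have hS : Measurable[𝓕 (j + 1)] (S (j + 1)) := by
      rw [funext (hw.S_succ j)]
      exact ((ih.fst.mono (h𝓕 j.le_succ) le_rfl).add (hX _)).max measurable_const
    have hM : Measurable[𝓕 (j + 1)] (M (j + 1)) := by
      rw [funext (hw.M_succ j)]
      exact (ih.snd.mono (h𝓕 j.le_succ) le_rfl).max hS
    exact hS.prodMk hM

variable [MeasurableSpace Ω] {μ : Measure Ω}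

theorem jointLaw_eq_zero_of_lt (hw : IsReflectedWalk X S M) {j : ℕ} {x a : ℤ} (h : a < x) :
    jointLaw μ S M j x a = 0 := by
  have hempty : {ω | S j ω = x ∧ M j ω = a} = ∅ :=
    Set.eq_empty_of_forall_notMem fun ω ⟨hx, ha⟩ => by have := hw.S_le_M j ω; omega
  simp [jointLaw, hempty]

variable [IsProbabilityMeasure μ]

theorem jointLaw_succ (hw : IsReflectedWalk X S M) (hX : ∀ i, Measurable (X i))
    (hind : iIndepFun X μ) {j : ℕ} {u v : ℤ} (huv : u ≠ v)
    (hsum : μ.real {ω | X (j + 1) ω = u} + μ.real {ω | X (j + 1) ω = v} = 1) (x a : ℤ) :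
    jointLaw μ S M (j + 1) x a =
      μ.real {ω | reflectStep u (S j ω, M j ω) = (x, a)} * μ.real {ω | X (j + 1) ω = u}
        + μ.real {ω | reflectStep v (S j ω, M j ω) = (x, a)}
          * μ.real {ω | X (j + 1) ω = v} := by
  have hpast : Measurable[⨆ i ≤ j, MeasurableSpace.comap (X i) inferInstance]
      fun ω => (S j ω, M j ω) :=
    hw.measurable_of_monotone
      (𝓕 := fun k => ⨆ i ≤ k, MeasurableSpace.comap (X i) inferInstance)
      (fun _ _ hkl => biSup_mono fun _ hi => hi.trans hkl)
      (fun k => Measurable.of_comap_le (le_iSup₂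
        (f := fun i (_ : i ≤ k) => MeasurableSpace.comap (X i) inferInstance) k le_rfl)) j
  have hind' := hind.indepFun_succ_of_measurable_iSup hX hpast
  rw [← hind'.measureReal_comp_eq_of_add_eq_one (hX _) huv hsum reflectStep (x, a)]
  simp only [jointLaw, ← hw.succ_eq_reflectStep, Prod.mk.injEq]

theorem jointLaw_succ_of_green (hw : IsReflectedWalk X S M) (hX : ∀ i, Measurable (X i))
    (hind : iIndepFun X μ) {j : ℕ} {p q : ℝ} (h₁ : μ.real {ω | X (j + 1) ω = 1} = p)
    (h₀ : μ.real {ω | X (j + 1) ω = 0} = q) (hpq : p + q = 1) {x a : ℤ} (hxa : x ≤ a) :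
    jointLaw μ S M (j + 1) x a =
      p * (jointLaw μ S M j (x - 1) a + if x = a then jointLaw μ S M j (x - 1) (a - 1) else 0)
        + q * jointLaw μ S M j x a := by
  have hup : {ω | reflectStep 1 (S j ω, M j ω) = (x, a)} =
      {ω | (S j ω, M j ω) = (x - 1, a) ∨ (x = a ∧ (S j ω, M j ω) = (x - 1, a - 1))} := by
    ext ω
    exact reflectStep_one_eq_iff (hw.S_nonneg j ω) (hw.S_le_M j ω) hxa
  have hne : (x - 1, a) ≠ (x - 1, a - 1) := by simp only [ne_eq, Prod.mk.injEq]; omega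
  rw [hw.jointLaw_succ hX hind one_ne_zero (by rw [h₁, h₀, hpq]) x a, h₁, h₀, hup,
    hw.setOf_reflectStep_zero_eq,
    measureReal_eq_or_and_eq (hw.measurable_of_monotone monotone_const hX j) hne]
  simp only [jointLaw, Prod.mk.injEq]
  ring

theorem jointLaw_succ_of_red (hw : IsReflectedWalk X S M) (hX : ∀ i, Measurable (X i))
    (hind : iIndepFun X μ) {j : ℕ} {p q : ℝ} (h₀ : μ.real {ω | X (j + 1) ω = 0} = p)
    (h₁ : μ.real {ω | X (j + 1) ω = -1} = q) (hpq : p + q = 1) {x a : ℤ} (hx : 0 ≤ x) :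
    jointLaw μ S M (j + 1) x a =
      p * jointLaw μ S M j x a
        + q * (jointLaw μ S M j (x + 1) a + if x = 0 then jointLaw μ S M j 0 a else 0) := by
  have hdown : {ω | reflectStep (-1) (S j ω, M j ω) = (x, a)} =
      {ω | (S j ω, M j ω) = (x + 1, a) ∨ (x = 0 ∧ (S j ω, M j ω) = (0, a))} := by
    ext ω
    exact reflectStep_neg_one_eq_iff (hw.S_nonneg j ω) (hw.S_le_M j ω) hx
  have hne : (x + 1, a) ≠ (0, a) := by simp only [ne_eq, Prod.mk.injEq]; omega
  rw [hw.jointLaw_succ hX hind (show (0 : ℤ) ≠ -1 by norm_num) (by rw [h₀, h₁, hpq]) x a,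
    h₀, h₁, hw.setOf_reflectStep_zero_eq, hdown,
    measureReal_eq_or_and_eq (hw.measurable_of_monotone monotone_const hX j) hne]
  simp only [jointLaw, Prod.mk.injEq]
  ring

end IsReflectedWalk

/-- For the ℓ = 1 (RG-cycle) reflected traffic walk, the joint law
`F n x a = P(S_n = x ∧ M_n = a)` satisfies the two-step (full light-cycle) recurrence
for even n ≥ 2. -/
theorem maxQueue_F_two_step_recurrence
    (p q : ℝ) (hp : 0 < p) (hpq : p ≤ 1 / 2) (hq : q = 1 - p)
    {Ω : Type*} [MeasurableSpace Ω] (μ : Measure Ω) [IsProbabilityMeasure μ]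
    (X : ℕ → Ω → ℤ) (hXmeas : ∀ i, Measurable (X i))
    (hXindep : iIndepFun X μ)
    (hXodd : ∀ i : ℕ, Odd i →
      μ {ω | X i ω = 1} = ENNReal.ofReal p ∧ μ {ω | X i ω = 0} = ENNReal.ofReal q)
    (hXeven : ∀ i : ℕ, 1 ≤ i → Even i →
      μ {ω | X i ω = 0} = ENNReal.ofReal p ∧ μ {ω | X i ω = -1} = ENNReal.ofReal q)
    (S : ℕ → Ω → ℤ) (hS0 : ∀ ω, S 0 ω = 0)
    (hS : ∀ (j : ℕ) (ω : Ω), S (j + 1) ω = max (S j ω + X (j + 1) ω) 0)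
    (M : ℕ → Ω → ℤ) (hM0 : ∀ ω, M 0 ω = S 0 ω)
    (hM : ∀ (n : ℕ) (ω : Ω), M (n + 1) ω = max (M n ω) (S (n + 1) ω))
    (F : ℕ → ℤ → ℤ → ℝ)
    (hF : ∀ (n : ℕ) (x a : ℤ), F n x a = (μ {ω | S n ω = x ∧ M n ω = a}).toReal) :
    ∀ n : ℕ, 2 ≤ n → Even n → ∀ x a : ℤ, 0 ≤ x → x ≤ a → 1 ≤ a →
      F n x a =
        p * (if x = a then (1 : ℝ) else 0) * (p + q * (if x = 0 then (1 : ℝ) else 0))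
            * F (n - 2) (x - 1) (a - 1)
        + p * (p + q * (if x = 0 then (1 : ℝ) else 0)) * F (n - 2) (x - 1) a
        + p * q * (if x + 1 = a then (1 : ℝ) else 0) * (1 - (if x = a then (1 : ℝ) else 0))
            * F (n - 2) x (a - 1)
        + q * ((p + q * (if x = 0 then (1 : ℝ) else 0))
            + p * (1 - (if x = a then (1 : ℝ) else 0))) * F (n - 2) x a
        + q ^ 2 * (1 - (if x = a then (1 : ℝ) else 0)) * F (n - 2) (x + 1) a := by
  have hw : IsReflectedWalk X S M := ⟨hS0, hS, hM0, hM⟩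
  obtain rfl : F = jointLaw μ S M := funext fun n => funext fun x => funext fun a => hF n x a
  have hpq1 : p + q = 1 := by rw [hq]; ring
  have hq0 : 0 ≤ q := by linarith
  have hreal : ∀ {i : ℕ} {u : ℤ} {r : ℝ}, 0 ≤ r →
      μ {ω | X i ω = u} = ENNReal.ofReal r → μ.real {ω | X i ω = u} = r :=
    fun hr h => by rw [Measure.real, h, ENNReal.toReal_ofReal hr]
  intro n hn hev x a hx hxa ha
  obtain ⟨m, rfl⟩ : ∃ m, n = m + 2 := ⟨n - 2, by omega⟩
  obtain ⟨hred₀, hred₁⟩ := hXeven (m + 2) (by omega) hev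
  obtain ⟨hgreen₁, hgreen₀⟩ := hXodd (m + 1) (by simpa [parity_simps] using hev)
  have green : ∀ {x a : ℤ}, x ≤ a → _ := fun h => hw.jointLaw_succ_of_green hXmeas hXindep
    (hreal hp.le hgreen₁) (hreal hq0 hgreen₀) hpq1 h
  rw [Nat.add_sub_cancel, hw.jointLaw_succ_of_red hXmeas hXindep (j := m + 1)
    (hreal hp.le hred₀) (hreal hq0 hred₁) hpq1 hx, green hxa]
  rcases hxa.lt_or_eq with hlt | rfl
  · rw [green hlt]
    rcases hx.lt_or_eq with hpos | rfl
    · simp only [hpos.ne', hlt.ne, add_sub_cancel_right, ↓reduceIte]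
      split_ifs <;> ring
    · rw [green hxa]
      simp only [hlt.ne, add_sub_cancel_right, ↓reduceIte]
      split_ifs <;> ring
  · have hx0 : x ≠ 0 := by omega
    simp only [hw.jointLaw_eq_zero_of_lt (lt_add_one x), hx0, (lt_add_one x).ne', ↓reduceIte]
    ring
end

section
/- For every real λ with 0 < λ < 1, one has λ = 2θ(λ)/(θ(λ) + 2pq)², and moreover pλ/(1 - qλ) = 2pθ(λ)/(θ(λ)² - 2(1 - 2p)q·θ(λ) + 4p²q²). -/
/-!
With `c = p q`, the number `θ` is the smaller root of `λ x² - 2 (1 - 2 c λ) x + 4 c² λ = 0`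
(its discriminant is `4 (1 - 4 c λ)`), which is the first identity cleared of denominators:
`λ (θ + 2c)² = 2θ`. For the second, the denominator equals `(θ + 2 p q)² - 2 q θ`, so multiplying
it by `λ` gives `2θ - 2 q θ λ = 2θ (1 - q λ)`.
-/

section

variable {c l θ : ℝ}

theorem mul_add_sq_eq_of_eq_sub_sqrt (hl : l ≠ 0) (hcl : 4 * c * l ≤ 1)
    (hθ : θ = (1 - 2 * c * l - √(1 - 4 * c * l)) / l) :
    l * (θ + 2 * c) ^ 2 = 2 * θ := by
  have hsq : √(1 - 4 * c * l) ^ 2 = 1 - 4 * c * l := Real.sq_sqrt (by linarith)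
  have hθl : √(1 - 4 * c * l) = 1 - 2 * c * l - θ * l := by
    rw [hθ]; field_simp; ring
  apply mul_left_cancel₀ hl
  linear_combination hsq - (√(1 - 4 * c * l) + 1 - 2 * c * l - θ * l) * hθl

theorem pos_of_eq_sub_sqrt (hc : 0 < c) (hl : 0 < l) (hcl : 4 * c * l ≤ 1)
    (hθ : θ = (1 - 2 * c * l - √(1 - 4 * c * l)) / l) : 0 < θ := by
  have hcl0 : 0 < c * l := mul_pos hc hl
  have hsqrt : √(1 - 4 * c * l) < 1 - 2 * c * l :=
    (Real.sqrt_lt' (by linarith)).2 (by nlinarith)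
  rw [hθ]
  exact div_pos (by linarith) hl

end

theorem mul_div_one_sub_mul_eq {p q l θ : ℝ} (hθ0 : θ ≠ 0) (hql : q * l ≠ 1)
    (hθ : l * (θ + 2 * p * q) ^ 2 = 2 * θ) :
    p * l / (1 - q * l)
      = 2 * p * θ / (θ ^ 2 - 2 * (1 - 2 * p) * q * θ + 4 * p ^ 2 * q ^ 2) := by
  have hD : (θ ^ 2 - 2 * (1 - 2 * p) * q * θ + 4 * p ^ 2 * q ^ 2) * l = 2 * θ * (1 - q * l) := by
    linear_combination hθ
  have hql' : 1 - q * l ≠ 0 := sub_ne_zero.2 (Ne.symm hql)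
  have hD0 : θ ^ 2 - 2 * (1 - 2 * p) * q * θ + 4 * p ^ 2 * q ^ 2 ≠ 0 := by
    intro h
    rw [h, zero_mul] at hD
    exact mul_ne_zero (mul_ne_zero two_ne_zero hθ0) hql' hD.symm
  rw [div_eq_div_iff hql' hD0]
  linear_combination p * hD

/-- λ = 2θ/(θ + 2pq)² and pλ/(1 - qλ) = 2pθ/(θ² - 2(1-2p)qθ + 4p²q²). -/
theorem maxQueue_lambda_theta_identities
    (p q : ℝ) (hp : 0 < p) (hpq : p ≤ 1 / 2) (hq : q = 1 - p)
    (l : ℝ) (hl : 0 < l) (hl1 : l < 1)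
    (θ : ℝ) (hθ : θ = (1 - 2 * p * q * l - Real.sqrt (1 - 4 * p * q * l)) / l) :
    l = 2 * θ / (θ + 2 * p * q) ^ 2 ∧
    p * l / (1 - q * l)
      = 2 * p * θ / (θ ^ 2 - 2 * (1 - 2 * p) * q * θ + 4 * p ^ 2 * q ^ 2) := by
  have hq0 : 0 < q := by linarith
  have hpq1 : 4 * (p * q) * l ≤ 1 := by
    have h4 : 4 * p * q ≤ 1 := by simpa [hq] using four_mul_le_sq_add p q
    nlinarith
  have hθ' : θ = (1 - 2 * (p * q) * l - √(1 - 4 * (p * q) * l)) / l := by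
    simpa only [mul_assoc] using hθ
  have hθ0 : 0 < θ := pos_of_eq_sub_sqrt (mul_pos hp hq0) hl hpq1 hθ'
  have hkey : l * (θ + 2 * p * q) ^ 2 = 2 * θ := by
    simpa only [mul_assoc] using mul_add_sq_eq_of_eq_sub_sqrt hl.ne' hpq1 hθ'
  refine ⟨(eq_div_iff (by positivity)).2 (by linarith), ?_⟩
  exact mul_div_one_sub_mul_eq hθ0.ne' (by nlinarith : q * l < 1).ne hkey
end

section
/- For every integer a ≥ 2 and every real λ with 0 < λ < 1, Σ_{n≥1} λⁿ P(M_{2n} = a) = (pλ/(1 - λ)) · [G(λ,a-1,a-1) - G(λ,a,a)], where G(λ,b,b) = Σ_{n≥1} λⁿ P(S_{2n} = b and M_{2n} = b). -/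
/-!
Even steps are nonpositive and odd steps at most `1` (almost surely), so the running maximum
can reach a level `b ≥ 1` for the first time only at an odd time `2k+1`, by an up-step from a
time `2k` at which the walk sits at its maximum `b - 1`. These first passages are disjoint and
the up-step is independent of the past, whence
`P(M_{2n} ≥ b) = p ∑_{k<n} P(S_{2k} = M_{2k} = b - 1)`. Summing against `λⁿ` is a Cauchy
product with the geometric series, giving `∑ λⁿ P(M_{2n} ≥ b) = pλ/(1-λ) G(b-1)` (the term
`k = 0` vanishes for `b ≥ 2`), and `P(M_{2n} = a) = P(M_{2n} ≥ a) - P(M_{2n} ≥ a+1)`.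
-/

open MeasureTheory ProbabilityTheory Finset

theorem ProbabilityTheory.iIndepFun.measure_inter_preimage_eq_mul_of_dependsOn
    {Ω ι β : Type*} [MeasurableSpace Ω] {μ : Measure Ω} [MeasurableSpace β] [Nonempty β]
    {X : ι → Ω → β} (hX : iIndepFun X μ) (hXm : ∀ i, Measurable (X i))
    {A : Set (ι → β)} (hA : MeasurableSet A) {T : Finset ι} (hAT : DependsOn (· ∈ A) T)
    {n : ι} (hn : n ∉ T) {B : Set β} (hB : MeasurableSet B) :
    μ ((fun ω i => X i ω) ⁻¹' A ∩ X n ⁻¹' B) =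
      μ ((fun ω i => X i ω) ⁻¹' A) * μ (X n ⁻¹' B) := by
  classical
  obtain ⟨x₀⟩ : Nonempty (ι → β) := inferInstance
  have hA' : (fun ω i => X i ω) ⁻¹' A =
      (fun ω (i : T) => X i ω) ⁻¹' (Function.updateFinset x₀ T ⁻¹' A) := by
    ext ω
    exact eq_iff_iff.1 (hAT fun i hi => by simp [Function.updateFinset, Finset.mem_coe.1 hi])
  have hB' : X n ⁻¹' B = (fun ω (i : ({n} : Finset ι)) => X i ω) ⁻¹'
      ((fun y => y ⟨n, mem_singleton_self n⟩) ⁻¹' B) := rfl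
  rw [hA', hB']
  exact (hX.indepFun_finset T {n} (disjoint_singleton_right.2 hn) hXm
    ).measure_inter_preimage_eq_mul _ _ (measurable_updateFinset hA) (measurable_pi_apply _ hB)

theorem MeasureTheory.ae_eq_or_eq_of_one_le_measure_add {Ω β : Type*} [MeasurableSpace Ω]
    {μ : Measure Ω} [IsProbabilityMeasure μ] [MeasurableSpace β] [MeasurableSingletonClass β]
    {f : Ω → β} (hf : Measurable f) {u v : β} (huv : u ≠ v)
    (h : 1 ≤ μ {ω | f ω = u} + μ {ω | f ω = v}) : ∀ᵐ ω ∂μ, f ω = u ∨ f ω = v := by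
  have hu := hf (measurableSet_singleton u)
  have hv := hf (measurableSet_singleton v)
  have hdisj : Disjoint {ω | f ω = u} {ω | f ω = v} :=
    Set.disjoint_left.2 fun ω hωu hωv => huv (hωu.symm.trans hωv)
  rw [← measure_union hdisj hv] at h
  exact (prob_compl_eq_zero_iff (hu.union hv)).2 (le_antisymm prob_le_one h)

lemma eq_partialSups_of_max_succ {α : Type*} [LinearOrder α] {s m : ℕ → α} (h0 : m 0 = s 0)
    (hm : ∀ n, m (n + 1) = max (m n) (s (n + 1))) : m = partialSups s := by
  funext n
  induction n with
  | zero => rw [h0, partialSups_zero]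
  | succ n ih => rw [hm, ih]; exact (partialSups_succ s n).symm

lemma tsum_pow_succ_mul_sum_range {l C : ℝ} (hl0 : 0 ≤ l) (hl1 : l < 1) {a : ℕ → ℝ}
    (ha : ∀ k, |a k| ≤ C) :
    ∑' n, l ^ (n + 1) * ∑ k ∈ range (n + 1), a k = l / (1 - l) * ∑' k, l ^ k * a k := by
  have hgeo : Summable fun k => ‖l ^ k‖ := by
    simpa [abs_of_nonneg hl0] using summable_geometric_of_lt_one hl0 hl1
  have hla : Summable fun k => ‖l ^ k * a k‖ :=
    (hgeo.mul_right C).of_nonneg_of_le (fun _ => norm_nonneg _)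
      fun k => by rw [norm_mul]; exact mul_le_mul_of_nonneg_left (ha k) (norm_nonneg _)
  calc ∑' n, l ^ (n + 1) * ∑ k ∈ range (n + 1), a k
      = l * ∑' n, ∑ k ∈ range (n + 1), l ^ k * a k * l ^ (n - k) := by
        rw [← tsum_mul_left]
        refine tsum_congr fun n => ?_
        rw [mul_sum, mul_sum]
        refine sum_congr rfl fun k hk => ?_
        rw [pow_succ, ← pow_mul_pow_sub l (Nat.le_of_lt_succ (mem_range.1 hk))]
        ring
    _ = l * ((∑' k, l ^ k * a k) * ∑' j, l ^ j) := by
        rw [tsum_mul_tsum_eq_tsum_sum_range_of_summable_norm hla hgeo]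
    _ = l / (1 - l) * ∑' k, l ^ k * a k := by
        rw [tsum_geometric_of_lt_one hl0 hl1]
        ring

namespace TrafficLightQueue

def reflWalk (x : ℕ → ℤ) : ℕ → ℤ
  | 0 => 0
  | j + 1 => max (reflWalk x j + x (j + 1)) 0

lemma eq_reflWalk {x s : ℕ → ℤ} (h0 : s 0 = 0) (hs : ∀ j, s (j + 1) = max (s j + x (j + 1)) 0) :
    s = reflWalk x := by
  funext j
  induction j with
  | zero => exact h0
  | succ j ih => rw [hs, ih, reflWalk]

def atRunningMax (b : ℤ) (j : ℕ) : Set (ℕ → ℤ) :=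
  {x | reflWalk x j = b ∧ partialSups (reflWalk x) j = b}

/-- When odd steps are at most `1` and even steps at most `0`, this is the event that the
running maximum first reaches `b` at time `2k+1`. -/
def firstPassageAt (b : ℤ) (k : ℕ) : Set (ℕ → ℤ) :=
  atRunningMax (b - 1) (2 * k) ∩ {x | x (2 * k + 1) = 1}

variable {x : ℕ → ℤ} {b : ℤ}

lemma le_partialSups_of_mem_firstPassageAt {k n : ℕ} (hx : x ∈ firstPassageAt b k)
    (hkn : k < n) :
    b ≤ partialSups (reflWalk x) (2 * n) := by
  obtain ⟨⟨hS, -⟩, hx1⟩ := hx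
  calc b ≤ reflWalk x (2 * k + 1) := by
        rw [reflWalk, hS, hx1, sub_add_cancel]; exact le_max_left _ _
    _ ≤ partialSups (reflWalk x) (2 * n) := le_partialSups_of_le _ (by omega)

lemma pairwise_disjoint_firstPassageAt (b : ℤ) :
    Pairwise (Function.onFun Disjoint (firstPassageAt b)) := by
  have key {k k' : ℕ} (h : k < k') : Disjoint (firstPassageAt b k) (firstPassageAt b k') :=
    Set.disjoint_left.2 fun x hx hx' => by
      have := le_partialSups_of_mem_firstPassageAt hx h
      rw [hx'.1.2] at this
      omega
  intro k k' hne
  rcases Nat.lt_or_gt_of_ne hne with h | h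
  exacts [key h, (key h).symm]

lemma exists_mem_firstPassageAt_of_le_partialSups (hodd : ∀ k, x (2 * k + 1) ≤ 1)
    (heven : ∀ k, x (2 * k + 2) ≤ 0) (hb : 1 ≤ b) :
    ∀ j, b ≤ partialSups (reflWalk x) j → ∃ k, 2 * k < j ∧ x ∈ firstPassageAt b k := by
  intro j
  induction j with
  | zero => intro h; rw [partialSups_zero, reflWalk] at h; omega
  | succ j ih =>
    intro h
    by_cases hj : b ≤ partialSups (reflWalk x) j
    · obtain ⟨k, hk, hx⟩ := ih hj
      exact ⟨k, by omega, hx⟩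
    have hSj1 : b ≤ reflWalk x (j + 1) :=
      (le_max_iff.1 (h.trans_eq (partialSups_succ _ j))).resolve_left hj
    have hstep : b ≤ reflWalk x j + x (j + 1) := by
      rw [reflWalk] at hSj1
      exact (le_max_iff.1 hSj1).resolve_right (by omega)
    have hSj : reflWalk x j ≤ partialSups (reflWalk x) j := le_partialSups _ j
    obtain ⟨k, rfl | rfl⟩ := Nat.even_or_odd' j
    · have := hodd k
      exact ⟨k, by omega, ⟨by omega, by omega⟩, show x (2 * k + 1) = 1 by omega⟩
    · have : x (2 * k + 1 + 1) ≤ 0 := heven k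
      omega

lemma le_partialSups_reflWalk_iff (hodd : ∀ k, x (2 * k + 1) ≤ 1)
    (heven : ∀ k, x (2 * k + 2) ≤ 0) (hb : 1 ≤ b) (n : ℕ) :
    b ≤ partialSups (reflWalk x) (2 * n) ↔ ∃ k < n, x ∈ firstPassageAt b k := by
  constructor
  · intro h
    obtain ⟨k, hk, hx⟩ := exists_mem_firstPassageAt_of_le_partialSups hodd heven hb _ h
    exact ⟨k, by omega, hx⟩
  · rintro ⟨k, hk, hx⟩
    exact le_partialSups_of_mem_firstPassageAt hx hk

lemma measurable_reflWalk (j : ℕ) : Measurable fun x : ℕ → ℤ => reflWalk x j := by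
  induction j with
  | zero => exact measurable_const
  | succ j ih => exact (ih.add (measurable_pi_apply (j + 1))).max measurable_const

lemma measurable_partialSups_reflWalk (j : ℕ) :
    Measurable fun x : ℕ → ℤ => partialSups (reflWalk x) j := by
  induction j with
  | zero => simpa using measurable_reflWalk 0
  | succ j ih => simpa using ih.max (measurable_reflWalk (j + 1))

lemma measurableSet_atRunningMax (b : ℤ) (j : ℕ) : MeasurableSet (atRunningMax b j) :=
  ((measurable_reflWalk _) (measurableSet_singleton _)).inter
    ((measurable_partialSups_reflWalk _) (measurableSet_singleton _))

lemma measurableSet_firstPassageAt (b : ℤ) (k : ℕ) : MeasurableSet (firstPassageAt b k) :=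
  (measurableSet_atRunningMax _ _).inter (measurable_pi_apply _ (measurableSet_singleton _))

lemma dependsOn_reflWalk (j : ℕ) : DependsOn (fun x => reflWalk x j) (Set.Iic j) := by
  induction j with
  | zero => exact fun _ _ _ => rfl
  | succ j ih =>
    intro x y h
    simp only [reflWalk, ih fun i hi => h i (Set.mem_Iic.2 (Nat.le_succ_of_le hi)),
      h (j + 1) (Set.mem_Iic.2 le_rfl)]

lemma dependsOn_partialSups_reflWalk (j : ℕ) :
    DependsOn (fun x => partialSups (reflWalk x) j) (Set.Iic j) := by
  intro x y h
  simp only [partialSups_apply]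
  exact Finset.sup'_congr _ rfl fun i hi => dependsOn_reflWalk i fun i' hi' =>
    h i' (Set.mem_Iic.2 (le_trans hi' (Finset.mem_Iic.1 hi)))

lemma dependsOn_mem_atRunningMax (b : ℤ) (j : ℕ) :
    DependsOn (· ∈ atRunningMax b j) (Set.Iic j) := fun x y h => by
  simp only [atRunningMax, Set.mem_ofPred_eq, dependsOn_reflWalk j h,
    dependsOn_partialSups_reflWalk j h]

lemma atRunningMax_zero {b : ℤ} (hb : b ≠ 0) : atRunningMax b 0 = ∅ :=
  Set.eq_empty_of_forall_notMem fun _ hx => hb (hx.1.symm.trans rfl)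

section Probability

variable {Ω : Type*} [MeasurableSpace Ω] {μ : Measure Ω} [IsProbabilityMeasure μ]
  {X : ℕ → Ω → ℤ} {p : ℝ}

lemma summable_pow_succ_mul_measureReal {l : ℝ} (hl0 : 0 ≤ l) (hl1 : l < 1) (s : ℕ → Set Ω) :
    Summable fun n => l ^ (n + 1) * μ.real (s n) :=
  ((summable_geometric_of_lt_one hl0 hl1).mul_left l).of_norm_bounded fun n => by
    rw [norm_mul, norm_pow, Real.norm_of_nonneg hl0, Real.norm_of_nonneg measureReal_nonneg,
      pow_succ']
    exact mul_le_of_le_one_right (by positivity) measureReal_le_one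

lemma measureReal_eq_sub_measureReal_le {f : Ω → ℤ} (hf : Measurable f) (b : ℤ) :
    μ.real {ω | f ω = b} = μ.real {ω | b ≤ f ω} - μ.real {ω | b + 1 ≤ f ω} := by
  rw [← measureReal_sdiff (fun ω hω => by simp only [Set.mem_ofPred_eq] at hω ⊢; omega)
    (measurableSet_le measurable_const hf)]
  congr 1
  ext ω
  simp only [Set.mem_ofPred_eq, Set.mem_sdiff]
  omega

theorem ae_odd_le_one_and_even_nonpos (hXm : ∀ i, Measurable (X i))
    (hodd : ∀ k, 1 ≤ μ {ω | X (2 * k + 1) ω = 1} + μ {ω | X (2 * k + 1) ω = 0})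
    (heven : ∀ k, 1 ≤ μ {ω | X (2 * k + 2) ω = 0} + μ {ω | X (2 * k + 2) ω = -1}) :
    ∀ᵐ ω ∂μ, (∀ k, X (2 * k + 1) ω ≤ 1) ∧ ∀ k, X (2 * k + 2) ω ≤ 0 := by
  have h1 := ae_all_iff.2 fun k =>
    ae_eq_or_eq_of_one_le_measure_add (hXm _) (by decide) (hodd k)
  have h2 := ae_all_iff.2 fun k =>
    ae_eq_or_eq_of_one_le_measure_add (hXm _) (by decide) (heven k)
  filter_upwards [h1, h2] with ω hω1 hω2
  exact ⟨fun k => by rcases hω1 k with h | h <;> omega,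
    fun k => by rcases hω2 k with h | h <;> omega⟩

theorem measureReal_le_partialSups_reflWalk (hXm : ∀ i, Measurable (X i))
    (hXi : iIndepFun X μ)
    (hsteps : ∀ᵐ ω ∂μ, (∀ k, X (2 * k + 1) ω ≤ 1) ∧ ∀ k, X (2 * k + 2) ω ≤ 0)
    (hup : ∀ k, μ.real {ω | X (2 * k + 1) ω = 1} = p) {b : ℤ} (hb : 1 ≤ b) (n : ℕ) :
    μ.real {ω | b ≤ partialSups (reflWalk (X · ω)) (2 * n)} =
      p * ∑ k ∈ range n, μ.real ((fun ω i => X i ω) ⁻¹' atRunningMax (b - 1) (2 * k)) := by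
  have hξ : Measurable fun ω (i : ℕ) => X i ω := measurable_pi_lambda _ hXm
  have hunion : {ω | b ≤ partialSups (reflWalk (X · ω)) (2 * n)} =ᵐ[μ]
      ⋃ k ∈ range n, (fun ω i => X i ω) ⁻¹' firstPassageAt b k := by
    refine Filter.eventuallyEq_set.2 (hsteps.mono fun ω hω => ?_)
    simpa using le_partialSups_reflWalk_iff (x := (X · ω)) hω.1 hω.2 hb n
  rw [measureReal_congr hunion, measureReal_biUnion_finset
    (fun k _ k' _ h => (pairwise_disjoint_firstPassageAt b h).preimage _)
    (fun k _ => hξ (measurableSet_firstPassageAt b k)), mul_sum]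
  refine sum_congr rfl fun k _ => ?_
  have hindep := hXi.measure_inter_preimage_eq_mul_of_dependsOn hXm
    (measurableSet_atRunningMax (b - 1) (2 * k)) (T := Finset.Iic (2 * k))
    (by simpa using dependsOn_mem_atRunningMax (b - 1) (2 * k)) (n := 2 * k + 1)
    (by simp) (measurableSet_singleton 1)
  calc μ.real ((fun ω i => X i ω) ⁻¹' firstPassageAt b k)
      = μ.real ((fun ω i => X i ω) ⁻¹' atRunningMax (b - 1) (2 * k) ∩ X (2 * k + 1) ⁻¹' {1}) :=
        rfl
    _ = μ.real ((fun ω i => X i ω) ⁻¹' atRunningMax (b - 1) (2 * k)) *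
          μ.real {ω | X (2 * k + 1) ω = 1} := by
        simp only [measureReal_def, hindep, ENNReal.toReal_mul]; rfl
    _ = _ := by rw [hup k, mul_comm]

theorem tsum_pow_mul_measureReal_le_partialSups (hXm : ∀ i, Measurable (X i))
    (hXi : iIndepFun X μ)
    (hsteps : ∀ᵐ ω ∂μ, (∀ k, X (2 * k + 1) ω ≤ 1) ∧ ∀ k, X (2 * k + 2) ω ≤ 0)
    (hup : ∀ k, μ.real {ω | X (2 * k + 1) ω = 1} = p) {l : ℝ} (hl0 : 0 ≤ l) (hl1 : l < 1)
    {b : ℤ} (hb : 2 ≤ b) :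
    ∑' n, l ^ (n + 1) * μ.real {ω | b ≤ partialSups (reflWalk (X · ω)) (2 * (n + 1))} =
      p * l / (1 - l) * ∑' n, l ^ (n + 1) *
        μ.real ((fun ω i => X i ω) ⁻¹' atRunningMax (b - 1) (2 * (n + 1))) := by
  set A : ℕ → ℝ := fun k => μ.real ((fun ω i => X i ω) ⁻¹' atRunningMax (b - 1) (2 * k))
  have hA0 : A 0 = 0 := by simp [A, atRunningMax_zero (show b - 1 ≠ 0 by omega)]
  have hA : ∀ k, |A k| ≤ 1 := fun k => by
    rw [abs_of_nonneg measureReal_nonneg]; exact measureReal_le_one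
  simp_rw [measureReal_le_partialSups_reflWalk hXm hXi hsteps hup (by omega : (1 : ℤ) ≤ b)]
  calc ∑' n, l ^ (n + 1) * (p * ∑ k ∈ range (n + 1), A k)
      = p * ∑' n, l ^ (n + 1) * ∑ k ∈ range (n + 1), A k := by
        rw [← tsum_mul_left]; congr 1 with n; ring
    _ = p * (l / (1 - l) * ∑' k, l ^ k * A k) := by rw [tsum_pow_succ_mul_sum_range hl0 hl1 hA]
    _ = p * l / (1 - l) * ∑' n, l ^ (n + 1) * A (n + 1) := by
        have hsum : Summable fun n => l ^ (n + 1) * A (n + 1) :=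
          summable_pow_succ_mul_measureReal hl0 hl1 fun n =>
            (fun ω i => X i ω) ⁻¹' atRunningMax (b - 1) (2 * (n + 1))
        rw [tsum_eq_zero_add' (f := fun k => l ^ k * A k) hsum, hA0]
        ring

end Probability

end TrafficLightQueue

open TrafficLightQueue

theorem maxQueue_M_genfun_telescope_general
    (p q : ℝ) (hp : 0 < p) (hq : q = 1 - p)
    {Ω : Type*} [MeasurableSpace Ω] (μ : Measure Ω) [IsProbabilityMeasure μ]
    (X : ℕ → Ω → ℤ) (hXmeas : ∀ i, Measurable (X i))
    (hXindep : iIndepFun X μ)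
    (hXodd : ∀ i : ℕ, Odd i →
      μ {ω | X i ω = 1} = ENNReal.ofReal p ∧ μ {ω | X i ω = 0} = ENNReal.ofReal q)
    (hXeven : ∀ i : ℕ, 1 ≤ i → Even i →
      μ {ω | X i ω = 0} = ENNReal.ofReal p ∧ μ {ω | X i ω = -1} = ENNReal.ofReal q)
    (S : ℕ → Ω → ℤ) (hS0 : ∀ ω, S 0 ω = 0)
    (hS : ∀ (j : ℕ) (ω : Ω), S (j + 1) ω = max (S j ω + X (j + 1) ω) 0)
    (M : ℕ → Ω → ℤ) (hM0 : ∀ ω, M 0 ω = S 0 ω)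
    (hM : ∀ (n : ℕ) (ω : Ω), M (n + 1) ω = max (M n ω) (S (n + 1) ω))
    (a : ℕ) (ha : 2 ≤ a) (l : ℝ) (hl : 0 < l) (hl1 : l < 1)
    (G : ℕ → ℝ)
    (hG : ∀ b : ℕ, G b = ∑' n : ℕ, l ^ (n + 1)
        * (μ {ω | S (2 * (n + 1)) ω = (b : ℤ) ∧ M (2 * (n + 1)) ω = (b : ℤ)}).toReal) :
    ∑' n : ℕ, l ^ (n + 1) * (μ {ω | M (2 * (n + 1)) ω = (a : ℤ)}).toReal
      = p * l / (1 - l) * (G (a - 1) - G a) := by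
  have hSX : ∀ j ω, S j ω = reflWalk (X · ω) j := fun j ω =>
    congrFun (eq_reflWalk (s := (S · ω)) (hS0 ω) (hS · ω)) j
  have hMX : ∀ j ω, M j ω = partialSups (reflWalk (X · ω)) j := fun j ω => by
    rw [congrFun (eq_partialSups_of_max_succ (m := (M · ω)) (s := (S · ω)) (hM0 ω) (hM · ω)) j]
    simp only [hSX]
  have hmass : 1 ≤ ENNReal.ofReal p + ENNReal.ofReal q := by
    simpa [hq] using ENNReal.ofReal_add_le (p := p) (q := 1 - p)
  have hsteps := ae_odd_le_one_and_even_nonpos (μ := μ) hXmeas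
    (fun k => by obtain ⟨h1, h0⟩ := hXodd _ (odd_two_mul_add_one k); rwa [h1, h0])
    (fun k => by
      obtain ⟨h0, h1⟩ := hXeven (2 * k + 2) (by omega) ⟨k + 1, by ring⟩
      rwa [h0, h1])
  have hup : ∀ k, μ.real {ω | X (2 * k + 1) ω = 1} = p := fun k => by
    rw [measureReal_def, (hXodd _ (odd_two_mul_add_one k)).1, ENNReal.toReal_ofReal hp.le]
  have hlevel : ∀ b : ℕ, 2 ≤ b → ∑' n, l ^ (n + 1) * μ.real {ω | (b : ℤ) ≤ M (2 * (n + 1)) ω} =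
      p * l / (1 - l) * G (b - 1) := fun b hb => by
    have hcast : ((b - 1 : ℕ) : ℤ) = b - 1 := by omega
    simp only [hMX, hSX, hG, hcast]
    exact tsum_pow_mul_measureReal_le_partialSups hXmeas hXindep hsteps hup hl.le hl1
      (by exact_mod_cast hb)
  have hMmeas : ∀ j, Measurable (M j) := fun j => by
    simp only [funext (hMX j)]
    exact (measurable_partialSups_reflWalk j).comp (measurable_pi_lambda _ hXmeas)
  have hnext := hlevel (a + 1) (by omega)
  push_cast at hnext
  simp only [← measureReal_def, measureReal_eq_sub_measureReal_le (hMmeas _), mul_sub]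
  rw [Summable.tsum_sub (summable_pow_succ_mul_measureReal hl.le hl1 _)
    (summable_pow_succ_mul_measureReal hl.le hl1 _), hlevel a ha, hnext]

/-- For a ≥ 2,
Σ_{n≥1} λⁿ P(M_{2n} = a) = (pλ/(1-λ)) · [G(λ,a-1,a-1) - G(λ,a,a)]. -/
theorem maxQueue_M_genfun_telescope
    (p q : ℝ) (hp : 0 < p) (hpq : p ≤ 1 / 2) (hq : q = 1 - p)
    {Ω : Type*} [MeasurableSpace Ω] (μ : Measure Ω) [IsProbabilityMeasure μ]
    (X : ℕ → Ω → ℤ) (hXmeas : ∀ i, Measurable (X i))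
    (hXindep : iIndepFun X μ)
    (hXodd : ∀ i : ℕ, Odd i →
      μ {ω | X i ω = 1} = ENNReal.ofReal p ∧ μ {ω | X i ω = 0} = ENNReal.ofReal q)
    (hXeven : ∀ i : ℕ, 1 ≤ i → Even i →
      μ {ω | X i ω = 0} = ENNReal.ofReal p ∧ μ {ω | X i ω = -1} = ENNReal.ofReal q)
    (S : ℕ → Ω → ℤ) (hS0 : ∀ ω, S 0 ω = 0)
    (hS : ∀ (j : ℕ) (ω : Ω), S (j + 1) ω = max (S j ω + X (j + 1) ω) 0)
    (M : ℕ → Ω → ℤ) (hM0 : ∀ ω, M 0 ω = S 0 ω)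
    (hM : ∀ (n : ℕ) (ω : Ω), M (n + 1) ω = max (M n ω) (S (n + 1) ω))
    (a : ℕ) (ha : 2 ≤ a) (l : ℝ) (hl : 0 < l) (hl1 : l < 1)
    (G : ℕ → ℝ)
    (hG : ∀ b : ℕ, G b = ∑' n : ℕ, l ^ (n + 1)
        * (μ {ω | S (2 * (n + 1)) ω = (b : ℤ) ∧ M (2 * (n + 1)) ω = (b : ℤ)}).toReal) :
    ∑' n : ℕ, l ^ (n + 1) * (μ {ω | M (2 * (n + 1)) ω = (a : ℤ)}).toReal
      = p * l / (1 - l) * (G (a - 1) - G a) :=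
  maxQueue_M_genfun_telescope_general p q hp hq μ X hXmeas hXindep hXodd hXeven S hS0 hS M hM0 hM a
    ha l hl hl1 G hG
end

section
/- In the symmetric case p = q = 1/2, the expected maximum queue length satisfies the Abel-type limit lim_{λ→1⁻} (1 - λ)^{3/2} · Σ_{n≥1} λⁿ E(M_{2n}) = π/4; equivalently, in the Abel sense E(M_{2n})/√(2n) converges to √(π/8). -/
/-!
Fix a level `r ≥ 1` and write `l = 4x / (1 + x)²` with `0 < x < 1`. Over one traffic-light cycle
the pair `(X_{2n+1}, X_{2n+2})` is uniform on `{0, 1} × {0, -1}` and independent of the past, so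
`(S_{2n}, M_{2n})` is a Markov chain. For a suitable constant `C` the function
`G k = (1 - C (x^(k+1) + x^(-k))) / (1 - l)` satisfies `G = 1 + l P G`, where `P` is the transition
kernel of this chain killed once `M` reaches `r`. Hence `W n = E[G(S_{2n}); M_{2n} < r]` satisfies
`W n - l W (n+1) = P(M_{2n} < r)`, and telescoping gives
`∑ₙ lⁿ P(M_{2n} ≥ r) = 2xʳ / ((1 + x^{2r}) (1 - l))`. Summing over `r`, since
`E M = ∑_{r ≥ 1} P(M ≥ r)`, yields `∑ₙ lⁿ E M_{2n} = Φ(x) / (1 - l)` with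
`Φ(x) = ∑_{r ≥ 1} 2xʳ / (1 + x^{2r})`.
As `√(1 - l) = (1 - x) / (1 + x)`, the claim reduces to `(1 - x) Φ(x) → π / 2` as `x → 1⁻`, which
follows from comparing `-log x · Φ(x)` with the telescoping sum of `2 arctan (xʳ)`: the derivative
of `r ↦ 2 arctan (xʳ)` is `log x · 2xʳ / (1 + x^{2r})`.
-/

open MeasureTheory ProbabilityTheory Filter Real Set Topology

theorem hasSum_sub_succ_of_antitone {a : ℕ → ℝ} {L : ℝ} (ha : Antitone a)
    (hL : Tendsto a atTop (𝓝 L)) : HasSum (fun n => a n - a (n + 1)) (a 0 - L) := by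
  rw [hasSum_iff_tendsto_nat_of_nonneg (fun n => sub_nonneg.2 (ha n.le_succ))]
  simpa only [Finset.sum_range_sub'] using tendsto_const_nhds.sub hL

theorem monotoneOn_div_one_add_sq : MonotoneOn (fun t : ℝ => t / (1 + t ^ 2)) (Icc 0 1) := by
  intro a ⟨ha, _⟩ b ⟨_, hb⟩ hab
  dsimp only
  rw [div_le_div_iff₀ (by positivity) (by positivity)]
  have hab1 : a * b ≤ 1 := mul_le_one₀ (hab.trans hb) (ha.trans hab) hb
  nlinarith [mul_nonneg (sub_nonneg.2 hab) (sub_nonneg.2 hab1)]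

theorem exists_arctan_sub_arctan_eq {u v : ℝ} (hu : 0 < u) (huv : u < v) :
    ∃ c ∈ Ioo u v, arctan v - arctan u = (log v - log u) * (c / (1 + c ^ 2)) := by
  have hpos : ∀ t ∈ Icc u v, t ≠ 0 := fun t ht => (hu.trans_le ht.1).ne'
  obtain ⟨c, hc, h⟩ := exists_ratio_hasDerivAt_eq_ratio_slope arctan (fun t => 1 / (1 + t ^ 2))
    huv continuous_arctan.continuousOn (fun t _ => hasDerivAt_arctan t) log (fun t => t⁻¹)
    (continuousOn_log.mono fun t ht => hpos t ht)
    (fun t ht => hasDerivAt_log (hpos t (Ioo_subset_Icc_self ht)))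
  have hc0 : c ≠ 0 := hpos c (Ioo_subset_Icc_self hc)
  refine ⟨c, hc, ?_⟩
  field_simp at h ⊢
  linarith

theorem log_sub_mul_le_arctan_sub_arctan {u v : ℝ} (hu : 0 < u) (huv : u < v) (hv : v ≤ 1) :
    (log v - log u) * (u / (1 + u ^ 2)) ≤ arctan v - arctan u := by
  obtain ⟨c, hc, h⟩ := exists_arctan_sub_arctan_eq hu huv
  rw [h]
  exact mul_le_mul_of_nonneg_left (monotoneOn_div_one_add_sq ⟨hu.le, by linarith⟩
    ⟨by linarith [hc.1], by linarith [hc.2]⟩ hc.1.le) (sub_nonneg.2 (log_le_log hu huv.le))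

theorem arctan_sub_arctan_le_log_sub_mul {u v : ℝ} (hu : 0 < u) (huv : u < v) (hv : v ≤ 1) :
    arctan v - arctan u ≤ (log v - log u) * (v / (1 + v ^ 2)) := by
  obtain ⟨c, hc, h⟩ := exists_arctan_sub_arctan_eq hu huv
  rw [h]
  exact mul_le_mul_of_nonneg_left (monotoneOn_div_one_add_sq
    ⟨by linarith [hc.1], by linarith [hc.2]⟩ ⟨by linarith, hv⟩ hc.2.le)
    (sub_nonneg.2 (log_le_log hu huv.le))

theorem hasSum_arctan_pow_sub {x : ℝ} (hx0 : 0 ≤ x) (hx1 : x < 1) (m : ℕ) :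
    HasSum (fun k => 2 * arctan (x ^ (k + m)) - 2 * arctan (x ^ (k + 1 + m)))
      (2 * arctan (x ^ m)) := by
  have hanti : Antitone fun k => 2 * arctan (x ^ (k + m)) := fun i j hij =>
    mul_le_mul_of_nonneg_left
      (arctan_strictMono.monotone (pow_le_pow_of_le_one hx0 hx1.le (by omega))) zero_le_two
  have hlim : Tendsto (fun k => 2 * arctan (x ^ (k + m))) atTop (𝓝 (2 * arctan 0)) :=
    ((continuous_arctan.tendsto 0).comp ((tendsto_pow_atTop_nhds_zero_of_lt_one hx0 hx1).comp
      (tendsto_add_atTop_nat m))).const_mul 2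
  simpa using hasSum_sub_succ_of_antitone hanti hlim

noncomputable def phi (x : ℝ) : ℝ := ∑' k : ℕ, 2 * x ^ (k + 1) / (1 + (x ^ (k + 1)) ^ 2)

theorem summable_phi {x : ℝ} (hx0 : 0 < x) (hx1 : x < 1) :
    Summable fun k : ℕ => 2 * x ^ (k + 1) / (1 + (x ^ (k + 1)) ^ 2) := by
  refine .of_nonneg_of_le (fun k => by positivity) (fun k => ?_)
    ((summable_geometric_of_lt_one hx0.le hx1).mul_left (2 * x))
  rw [div_le_iff₀ (by positivity), pow_succ' x k]
  nlinarith [mul_nonneg (mul_pos hx0 (pow_pos hx0 k)).le (sq_nonneg (x * x ^ k))]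

theorem phi_nonneg {x : ℝ} (hx0 : 0 < x) : 0 ≤ phi x := tsum_nonneg fun k => by positivity

theorem log_pow_sub_log_pow_succ (x : ℝ) (n : ℕ) : log (x ^ n) - log (x ^ (n + 1)) = -log x := by
  rw [log_pow, log_pow]; push_cast; ring

theorem neg_log_mul_phi_le {x : ℝ} (hx0 : 0 < x) (hx1 : x < 1) : -log x * phi x ≤ π / 2 := by
  have hterm : ∀ k : ℕ, -log x * (2 * x ^ (k + 1) / (1 + (x ^ (k + 1)) ^ 2)) ≤
      2 * arctan (x ^ k) - 2 * arctan (x ^ (k + 1)) := fun k => by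
    have h := log_sub_mul_le_arctan_sub_arctan (pow_pos hx0 (k + 1))
      (pow_lt_pow_right_of_lt_one₀ hx0 hx1 k.lt_succ_self) (pow_le_one₀ hx0.le hx1.le)
    rw [log_pow_sub_log_pow_succ] at h
    rw [mul_div_assoc, mul_left_comm]
    linarith
  have h := hasSum_arctan_pow_sub hx0.le hx1 0
  simp only [add_zero, pow_zero, arctan_one] at h
  rw [phi, ← tsum_mul_left]
  exact (hasSum_le hterm ((summable_phi hx0 hx1).mul_left _).hasSum h).trans_eq (by ring)

theorem two_mul_arctan_le_neg_log_mul_phi {x : ℝ} (hx0 : 0 < x) (hx1 : x < 1) :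
    2 * arctan x ≤ -log x * phi x := by
  have hterm : ∀ k : ℕ, 2 * arctan (x ^ (k + 1)) - 2 * arctan (x ^ (k + 1 + 1)) ≤
      -log x * (2 * x ^ (k + 1) / (1 + (x ^ (k + 1)) ^ 2)) := fun k => by
    have h := arctan_sub_arctan_le_log_sub_mul (pow_pos hx0 (k + 1 + 1))
      (pow_lt_pow_right_of_lt_one₀ hx0 hx1 (k + 1).lt_succ_self) (pow_le_one₀ hx0.le hx1.le)
    rw [log_pow_sub_log_pow_succ] at h
    rw [mul_div_assoc, mul_left_comm]
    linarith
  have h := hasSum_arctan_pow_sub hx0.le hx1 1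
  rw [pow_one] at h
  rw [phi, ← tsum_mul_left]
  exact hasSum_le hterm h ((summable_phi hx0 hx1).mul_left _).hasSum

theorem tendsto_one_sub_mul_phi :
    Tendsto (fun x => (1 - x) * phi x) (𝓝[<] 1) (𝓝 (π / 2)) := by
  have hlower : Tendsto (fun x => x * (2 * arctan x)) (𝓝[<] 1) (𝓝 (π / 2)) := by
    refine ((Continuous.tendsto' (by fun_prop) 1 (π / 2) ?_)).mono_left nhdsWithin_le_nhds
    rw [arctan_one]; ring
  refine tendsto_of_tendsto_of_tendsto_of_le_of_le' hlower tendsto_const_nhds ?_ ?_ <;>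
    filter_upwards [Ioo_mem_nhdsLT (show (0 : ℝ) < 1 by norm_num)] with x ⟨hx0, hx1⟩
  · have hθ : x * -log x ≤ 1 - x := by
      have h : x * -log x ≤ x * (x⁻¹ - 1) :=
        mul_le_mul_of_nonneg_left (by linarith [one_sub_inv_le_log_of_pos hx0]) hx0.le
      rwa [mul_sub, mul_inv_cancel₀ hx0.ne', mul_one] at h
    calc x * (2 * arctan x) ≤ x * (-log x * phi x) :=
          mul_le_mul_of_nonneg_left (two_mul_arctan_le_neg_log_mul_phi hx0 hx1) hx0.le
      _ = (x * -log x) * phi x := by ring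
      _ ≤ (1 - x) * phi x := mul_le_mul_of_nonneg_right hθ (phi_nonneg hx0)
  · calc (1 - x) * phi x ≤ -log x * phi x := by
          gcongr
          · exact phi_nonneg hx0
          · linarith [log_le_sub_one_of_pos hx0]
      _ ≤ π / 2 := neg_log_mul_phi_le hx0 hx1

theorem four_mul_div_one_add_sq_lt_one {x : ℝ} (hx0 : 0 < x) (hx1 : x < 1) :
    4 * x / (1 + x) ^ 2 < 1 := by
  rw [div_lt_one (by positivity)]
  nlinarith [sq_pos_of_pos (sub_pos.2 hx1)]

/-- For `l = 4x / (1 + x)²` both `xᵏ` and `x⁻ᵏ` solve `l / 4 · (g (k-1) + 2 g k + g (k+1)) = g k`;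
the combination `x^(k+1) + x^(-k)` is symmetric about `k = -1/2`, and `C` is chosen so that
`G (r - 1) + G r = 0`. -/
noncomputable def queueHarmonic (x : ℝ) (r : ℕ) (k : ℤ) : ℝ :=
  (1 - 2 * x ^ r / ((1 + x) * (1 + (x ^ r) ^ 2)) * (x ^ (k + 1) + x ^ (-k))) /
    (1 - 4 * x / (1 + x) ^ 2)

section queueHarmonic

variable {x : ℝ} (r : ℕ)

theorem queueHarmonic_neg_one : queueHarmonic x r (-1) = queueHarmonic x r 0 := by
  simp [queueHarmonic, add_comm]

theorem queueHarmonic_sub_one_add_self (hx : 0 < x) :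
    queueHarmonic x r (r - 1) + queueHarmonic x r r = 0 := by
  have h1 : x ^ ((r : ℤ) - 1 + 1) = x ^ r := by simp
  have h2 : x ^ (-((r : ℤ) - 1)) = x * (x ^ r)⁻¹ := by
    rw [neg_sub, zpow_sub₀ hx.ne', zpow_one, zpow_natCast, div_eq_mul_inv]
  have h3 : x ^ ((r : ℤ) + 1) = x ^ r * x := by rw [zpow_add_one₀ hx.ne', zpow_natCast]
  simp only [queueHarmonic, h1, h2, h3, zpow_neg, zpow_natCast]
  have : x ^ r ≠ 0 := by positivity
  field_simp
  ring

theorem queueHarmonic_average (hx0 : 0 < x) (hx1 : x ≠ 1) (k : ℤ) :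
    4 * x / (1 + x) ^ 2 / 4 *
        (queueHarmonic x r (k - 1) + 2 * queueHarmonic x r k + queueHarmonic x r (k + 1)) =
      queueHarmonic x r k - 1 := by
  have hx : x ≠ 0 := hx0.ne'
  have : 1 - x ≠ 0 := sub_ne_zero.2 hx1.symm
  have : x ^ k ≠ 0 := zpow_ne_zero k hx
  have hl : 1 - 4 * x / (1 + x) ^ 2 = (1 - x) ^ 2 / (1 + x) ^ 2 := by field_simp; ring
  simp only [queueHarmonic, sub_add_cancel, zpow_add₀ hx, zpow_sub₀ hx, zpow_neg, zpow_one,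
    neg_sub, neg_add, hl]
  field_simp
  ring

theorem inv_one_sub_sub_queueHarmonic_zero (hx : 0 < x) :
    (1 - 4 * x / (1 + x) ^ 2)⁻¹ - queueHarmonic x r 0 =
      2 * x ^ r / (1 + (x ^ r) ^ 2) / (1 - 4 * x / (1 + x) ^ 2) := by
  simp only [queueHarmonic, zero_add, zpow_one, neg_zero, zpow_zero]
  field_simp
  ring

end queueHarmonic

def queueStep (a : ℤ) (p : ℤ × ℤ) : ℤ × ℤ := (max (p.1 + a) 0, max p.2 (max (p.1 + a) 0))

theorem queueStep_mem (a : ℤ) (p : ℤ × ℤ) :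
    0 ≤ (queueStep a p).1 ∧ (queueStep a p).1 ≤ (queueStep a p).2 :=
  ⟨le_max_right _ _, le_max_right _ _⟩

def cycleIncrements : Finset (ℤ × ℤ) := {0, 1} ×ˢ {0, -1}

noncomputable def killedWeight (r : ℤ) (G : ℤ → ℝ) (p : ℤ × ℤ) : ℝ :=
  if p.2 < r then G p.1 else 0

theorem abs_killedWeight_le (r : ℕ) (G : ℤ → ℝ) {p : ℤ × ℤ} (hp0 : 0 ≤ p.1) (hp : p.1 ≤ p.2) :
    |killedWeight r G p| ≤ ∑ k ∈ Finset.range r, |G k| := by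
  unfold killedWeight
  split_ifs with h
  · lift p.1 to ℕ using hp0 with k
    exact Finset.single_le_sum (f := fun k : ℕ => |G k|) (fun _ _ => abs_nonneg _)
      (Finset.mem_range.2 (by omega))
  · simpa using Finset.sum_nonneg fun k (_ : k ∈ Finset.range r) => abs_nonneg (G k)

/-- `G (-1) = G 0` accounts for the reflection at `0`, and `G (r - 1) + G r = 0` for the paths
that are killed because the intermediate step of the cycle reaches `r`. -/
theorem sum_killedWeight_queueStep {G : ℤ → ℝ} {l : ℝ} {r : ℤ} (hG0 : G (-1) = G 0)
    (hGr : G (r - 1) + G r = 0) (hG : ∀ k, l / 4 * (G (k - 1) + 2 * G k + G (k + 1)) = G k - 1)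
    {p : ℤ × ℤ} (hp0 : 0 ≤ p.1) (hp : p.1 ≤ p.2) :
    l / 4 * ∑ z ∈ cycleIncrements, killedWeight r G (queueStep z.2 (queueStep z.1 p)) =
      killedWeight r (fun k => G k - 1) p := by
  obtain ⟨s, m⟩ := p
  dsimp only at hp0 hp
  have h00 : queueStep 0 (queueStep 0 (s, m)) = (s, m) := by simp [queueStep]; omega
  have h01 : queueStep (-1) (queueStep 0 (s, m)) = (max (s - 1) 0, m) := by
    simp [queueStep]; omega
  have h10 : queueStep 0 (queueStep 1 (s, m)) = (s + 1, max m (s + 1)) := by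
    simp [queueStep]; omega
  have h11 : queueStep (-1) (queueStep 1 (s, m)) = (s, max m (s + 1)) := by
    simp [queueStep]; omega
  simp only [cycleIncrements, Finset.sum_product, Finset.sum_pair (show (0 : ℤ) ≠ 1 by norm_num),
    Finset.sum_pair (show (0 : ℤ) ≠ -1 by norm_num), h00, h01, h10, h11, killedWeight]
  by_cases hm : m < r
  · have hleft : G (max (s - 1) 0) = G (s - 1) := by
      rcases hp0.eq_or_lt with rfl | hs
      · simpa using hG0.symm
      · rw [max_eq_left (by omega)]
    have hright : (if max m (s + 1) < r then G (s + 1) else 0) +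
        (if max m (s + 1) < r then G s else 0) = G (s + 1) + G s := by
      by_cases hs : s + 1 < r
      · simp [max_lt hm hs]
      · obtain rfl : r = s + 1 := by omega
        simp only [lt_self_iff_false, max_lt_iff, and_false, if_false]
        rw [add_sub_cancel_right] at hGr
        linarith
    simp only [hm, if_true, hleft]
    rw [← hG s]
    linear_combination (l / 4) * hright
  · have hm' : ¬ max m (s + 1) < r := fun h => hm ((le_max_left _ _).trans_lt h)
    simp [hm, hm']

section Probability

variable {Ω : Type*} [MeasurableSpace Ω] {μ : Measure Ω}

theorem ae_eq_or_eq_of_measure_eq_half [IsProbabilityMeasure μ] {α : Type*} [MeasurableSpace α]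
    [MeasurableSingletonClass α] {f : Ω → α} (hf : Measurable f) {a b : α} (hab : a ≠ b)
    (ha : μ {ω | f ω = a} = 1 / 2) (hb : μ {ω | f ω = b} = 1 / 2) :
    ∀ᵐ ω ∂μ, f ω = a ∨ f ω = b := by
  have hmeas : ∀ c, MeasurableSet {ω | f ω = c} := fun c => hf (measurableSet_singleton c)
  have hdisj : Disjoint {ω | f ω = a} {ω | f ω = b} :=
    disjoint_left.2 fun ω ha hb => hab (ha.symm.trans hb)
  rw [ae_iff, ← compl_ofPred, ofPred_or, prob_compl_eq_zero_iff ((hmeas a).union (hmeas b)),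
    measure_union hdisj (hmeas b), ha, hb, ENNReal.add_halves]

theorem integral_comp_eq_sum_of_indepFun {α β : Type*} [MeasurableSpace α] [MeasurableSpace β]
    [MeasurableSingletonClass β] {Y : Ω → α} {Z : Ω → β} (hY : Measurable Y) (hZ : Measurable Z)
    (hYZ : IndepFun Y Z μ) {T : Finset β} (hT : ∀ᵐ ω ∂μ, Z ω ∈ T) {f : α → β → ℝ}
    (hf : ∀ z ∈ T, Measurable (f · z)) (hfi : ∀ z ∈ T, Integrable (fun ω => f (Y ω) z) μ) :
    ∫ ω, f (Y ω) (Z ω) ∂μ = ∑ z ∈ T, μ.real (Z ⁻¹' {z}) * ∫ ω, f (Y ω) z ∂μ := by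
  have hsplit : ∀ᵐ ω ∂μ, f (Y ω) (Z ω) =
      ∑ z ∈ T, f (Y ω) z * ({z} : Set β).indicator 1 (Z ω) := hT.mono fun ω hω => by
    rw [Finset.sum_eq_single_of_mem (Z ω) hω fun z _ hz => by simp [Ne.symm hz]]
    simp
  rw [integral_congr_ae hsplit, integral_finsetSum]
  · refine Finset.sum_congr rfl fun z hz => ?_
    rw [hYZ.integral_fun_comp_mul_comp (g := ({z} : Set β).indicator 1) hY.aemeasurable
      hZ.aemeasurable (hf z hz).aestronglyMeasurable
      ((measurable_one.indicator (measurableSet_singleton z)).aestronglyMeasurable), mul_comm]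
    congr 1
    rw [← integral_indicator_one (hZ (measurableSet_singleton z))]
    rfl
  · intro z hz
    refine ((hfi z hz).indicator (hZ (measurableSet_singleton z))).congr (ae_of_all _ fun ω => ?_)
    by_cases h : Z ω = z <;> simp [h]

theorem hasSum_measureReal_le_integral [IsFiniteMeasure μ] {N : Ω → ℤ} (hN : Measurable N)
    {K : ℕ} (hNK : ∀ᵐ ω ∂μ, 0 ≤ N ω ∧ N ω ≤ K) :
    HasSum (fun k : ℕ => μ.real {ω | ((k + 1 : ℕ) : ℤ) ≤ N ω}) (∫ ω, (N ω : ℝ) ∂μ) := by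
  have hmeas : ∀ k : ℕ, MeasurableSet {ω | ((k + 1 : ℕ) : ℤ) ≤ N ω} :=
    fun k => hN measurableSet_Ici
  have hcount : ∀ᵐ ω ∂μ, (N ω : ℝ) =
      ∑ k ∈ Finset.range K, {ω | ((k + 1 : ℕ) : ℤ) ≤ N ω}.indicator 1 ω := hNK.mono fun ω hω => by
    simp only [Set.indicator_apply, mem_ofPred_eq, Pi.one_apply, Finset.sum_boole]
    rw [show {k ∈ Finset.range K | ((k + 1 : ℕ) : ℤ) ≤ N ω} = Finset.range (N ω).toNat by
      ext k; simp only [Finset.mem_filter, Finset.mem_range]; omega]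
    rw [Finset.card_range, ← Int.cast_natCast, Int.toNat_of_nonneg hω.1]
  have hnull : μ.real {ω | ¬ (0 ≤ N ω ∧ N ω ≤ K)} = 0 := by
    rw [measureReal_def, ae_iff.1 hNK, ENNReal.toReal_zero]
  rw [integral_congr_ae hcount,
    integral_finsetSum _ fun k _ => (integrable_const 1).indicator (hmeas k)]
  simp only [integral_indicator_one (hmeas _)]
  refine hasSum_sum_of_ne_finset_zero fun k hk => measureReal_mono_null ?_ hnull
  intro ω hω h
  simp only [Finset.mem_range, not_lt, mem_ofPred_eq] at hk hω
  omega

end Probability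

section Queue

variable {Ω : Type*}

theorem measurable_iSup_comap {ι β : Type*} [MeasurableSpace β] {X : ι → Ω → β} {s : Set ι}
    {i : ι} (hi : i ∈ s) : Measurable[⨆ i ∈ s, MeasurableSpace.comap (X i) inferInstance] (X i) :=
  Measurable.of_comap_le (le_iSup₂_of_le i hi le_rfl)

structure IsQueueProcess (X S M : ℕ → Ω → ℤ) : Prop where
  S_zero : ∀ ω, S 0 ω = 0
  S_succ : ∀ (j : ℕ) (ω : Ω), S (j + 1) ω = max (S j ω + X (j + 1) ω) 0
  M_zero : ∀ ω, M 0 ω = S 0 ω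
  M_succ : ∀ (n : ℕ) (ω : Ω), M (n + 1) ω = max (M n ω) (S (n + 1) ω)

namespace IsQueueProcess

variable {X S M : ℕ → Ω → ℤ} (hQ : IsQueueProcess X S M)
include hQ

theorem pair_zero (ω : Ω) : (S 0 ω, M 0 ω) = (0, 0) := by rw [hQ.M_zero, hQ.S_zero]

theorem pair_succ (j : ℕ) (ω : Ω) :
    (S (j + 1) ω, M (j + 1) ω) = queueStep (X (j + 1) ω) (S j ω, M j ω) := by
  rw [hQ.M_succ, hQ.S_succ]; rfl

theorem nonneg_and_le (j : ℕ) (ω : Ω) : 0 ≤ S j ω ∧ S j ω ≤ M j ω := by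
  cases j with
  | zero => simp [hQ.S_zero, hQ.M_zero]
  | succ j => simpa only [← hQ.pair_succ] using queueStep_mem (X (j + 1) ω) (S j ω, M j ω)

theorem le_of_increment_le_one {ω : Ω} (hX : ∀ i, X (i + 1) ω ≤ 1) (j : ℕ) :
    S j ω ≤ j ∧ M j ω ≤ j := by
  induction j with
  | zero => simp [hQ.S_zero, hQ.M_zero]
  | succ j ih =>
    rw [hQ.M_succ, hQ.S_succ]
    have := hX j
    push_cast
    omega

theorem measurable_pair_past (j : ℕ) :
    Measurable[⨆ i ∈ Iic j, MeasurableSpace.comap (X i) inferInstance]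
      fun ω => (S j ω, M j ω) := by
  induction j with
  | zero =>
    simp only [hQ.pair_zero]
    exact measurable_const
  | succ j ih =>
    simp only [hQ.pair_succ]
    have ih' := ih.mono (biSup_mono fun i hi => Iic_subset_Iic.2 j.le_succ hi) le_rfl
    exact (measurable_of_countable fun q : ℤ × ℤ × ℤ => queueStep q.1 q.2).comp
      ((measurable_iSup_comap (mem_Iic.2 le_rfl)).prodMk ih')

theorem indepFun_pair_increments [MeasurableSpace Ω] {μ : Measure Ω}
    (hXm : ∀ i, Measurable (X i)) (hXi : iIndepFun X μ) (j : ℕ) :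
    IndepFun (fun ω => (S j ω, M j ω)) (fun ω => (X (j + 1) ω, X (j + 2) ω)) μ := by
  rw [IndepFun_iff_Indep]
  have hdisj : Disjoint (Iic j) {j + 1, j + 2} :=
    Set.disjoint_left.2 fun i (hi : i ≤ j) h => by rcases h with rfl | rfl <;> omega
  refine indep_of_indep_of_le_right (indep_of_indep_of_le_left
    (indep_iSup_of_disjoint (fun i => (hXm i).comap_le) hXi.iIndep hdisj)
    (hQ.measurable_pair_past j).comap_le) (Measurable.comap_le ?_)
  exact (measurable_iSup_comap (by simp)).prodMk (measurable_iSup_comap (by simp))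

theorem measurable_pair [MeasurableSpace Ω] (hXm : ∀ i, Measurable (X i)) (j : ℕ) :
    Measurable fun ω => (S j ω, M j ω) :=
  (hQ.measurable_pair_past j).mono (iSup₂_le fun i _ => (hXm i).comap_le) le_rfl

theorem integrable_comp_pair [MeasurableSpace Ω] {μ : Measure Ω} [IsFiniteMeasure μ]
    (hXm : ∀ i, Measurable (X i)) {F : ℤ × ℤ → ℝ} {B : ℝ}
    (hF : ∀ p : ℤ × ℤ, 0 ≤ p.1 → p.1 ≤ p.2 → |F p| ≤ B) (j : ℕ) :
    Integrable (fun ω => F (S j ω, M j ω)) μ :=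
  .of_bound ((measurable_of_countable F).comp (hQ.measurable_pair hXm j)).aestronglyMeasurable B
    (ae_of_all _ fun ω => hF _ (hQ.nonneg_and_le j ω).1 (hQ.nonneg_and_le j ω).2)

end IsQueueProcess

end Queue

section TrafficLight

variable {Ω : Type*} [MeasurableSpace Ω]

structure IsTrafficLight (μ : Measure Ω) (X : ℕ → Ω → ℤ) : Prop where
  measurable : ∀ i, Measurable (X i)
  indep : iIndepFun X μ
  odd : ∀ i : ℕ, Odd i → μ {ω | X i ω = 1} = 1 / 2 ∧ μ {ω | X i ω = 0} = 1 / 2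
  even : ∀ i : ℕ, 1 ≤ i → Even i → μ {ω | X i ω = 0} = 1 / 2 ∧ μ {ω | X i ω = -1} = 1 / 2

namespace IsTrafficLight

variable {μ : Measure Ω} {X : ℕ → Ω → ℤ} (hX : IsTrafficLight μ X)
include hX

theorem measure_odd (n : ℕ) {a : ℤ} (ha : a = 0 ∨ a = 1) :
    μ {ω | X (2 * n + 1) ω = a} = 1 / 2 := by
  rcases ha with rfl | rfl
  exacts [(hX.odd _ (odd_two_mul_add_one n)).2, (hX.odd _ (odd_two_mul_add_one n)).1]

theorem measure_even (n : ℕ) {b : ℤ} (hb : b = 0 ∨ b = -1) :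
    μ {ω | X (2 * n + 2) ω = b} = 1 / 2 := by
  have h := hX.even (2 * n + 2) (by omega) ⟨n + 1, by ring⟩
  rcases hb with rfl | rfl
  exacts [h.1, h.2]

theorem measureReal_cycleIncrements (n : ℕ) {z : ℤ × ℤ} (hz : z ∈ cycleIncrements) :
    μ.real ((fun ω => (X (2 * n + 1) ω, X (2 * n + 2) ω)) ⁻¹' {z}) = 1 / 4 := by
  obtain ⟨a, b⟩ := z
  simp only [cycleIncrements, Finset.mem_product, Finset.mem_insert, Finset.mem_singleton] at hz
  have hpre : (fun ω => (X (2 * n + 1) ω, X (2 * n + 2) ω)) ⁻¹' {(a, b)} =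
      X (2 * n + 1) ⁻¹' {a} ∩ X (2 * n + 2) ⁻¹' {b} := by
    ext ω; simp
  have hind := hX.indep.indepFun (show 2 * n + 1 ≠ 2 * n + 2 by omega)
  rw [measureReal_def, hpre, hind.measure_inter_preimage_eq_mul _ _ (measurableSet_singleton a)
    (measurableSet_singleton b)]
  have ha := hX.measure_odd n hz.1
  have hb := hX.measure_even n hz.2
  simp only [preimage, mem_singleton_iff] at ha hb ⊢
  rw [ha, hb, ENNReal.toReal_mul]
  norm_num

variable [IsProbabilityMeasure μ]

theorem ae_odd (n : ℕ) : ∀ᵐ ω ∂μ, X (2 * n + 1) ω = 0 ∨ X (2 * n + 1) ω = 1 :=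
  ae_eq_or_eq_of_measure_eq_half (hX.measurable _) (by norm_num) (hX.measure_odd n (.inl rfl))
    (hX.measure_odd n (.inr rfl))

theorem ae_even (n : ℕ) : ∀ᵐ ω ∂μ, X (2 * n + 2) ω = 0 ∨ X (2 * n + 2) ω = -1 :=
  ae_eq_or_eq_of_measure_eq_half (hX.measurable _) (by norm_num) (hX.measure_even n (.inl rfl))
    (hX.measure_even n (.inr rfl))

theorem ae_le_one : ∀ᵐ ω ∂μ, ∀ i, X (i + 1) ω ≤ 1 := by
  rw [ae_all_iff]
  intro i
  obtain ⟨n, rfl | rfl⟩ := Nat.even_or_odd' i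
  · filter_upwards [hX.ae_odd n] with ω hω
    omega
  · filter_upwards [hX.ae_even n] with ω hω
    change X (2 * n + 2) ω ≤ 1
    omega

theorem ae_mem_cycleIncrements (n : ℕ) :
    ∀ᵐ ω ∂μ, (X (2 * n + 1) ω, X (2 * n + 2) ω) ∈ cycleIncrements := by
  filter_upwards [hX.ae_odd n, hX.ae_even n] with ω h₁ h₂
  simp [cycleIncrements, h₁, h₂]

end IsTrafficLight

end TrafficLight

section Cycle

variable {Ω : Type*} [MeasurableSpace Ω] {μ : Measure Ω} [IsProbabilityMeasure μ]
  {X S M : ℕ → Ω → ℤ} (hX : IsTrafficLight μ X) (hQ : IsQueueProcess X S M)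
include hX hQ

theorem integral_comp_pair_two_mul_succ {F : ℤ × ℤ → ℝ} {B : ℝ}
    (hF : ∀ p : ℤ × ℤ, 0 ≤ p.1 → p.1 ≤ p.2 → |F p| ≤ B) (n : ℕ) :
    ∫ ω, F (S (2 * (n + 1)) ω, M (2 * (n + 1)) ω) ∂μ =
      1 / 4 * ∫ ω, ∑ z ∈ cycleIncrements,
        F (queueStep z.2 (queueStep z.1 (S (2 * n) ω, M (2 * n) ω))) ∂μ := by
  have hstep : ∀ ω, (S (2 * (n + 1)) ω, M (2 * (n + 1)) ω) =
      queueStep (X (2 * n + 2) ω) (queueStep (X (2 * n + 1) ω) (S (2 * n) ω, M (2 * n) ω)) :=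
    fun ω => by rw [show 2 * (n + 1) = 2 * n + 1 + 1 by ring, hQ.pair_succ, hQ.pair_succ]
  have hint : ∀ z : ℤ × ℤ, Integrable
      (fun ω => F (queueStep z.2 (queueStep z.1 (S (2 * n) ω, M (2 * n) ω)))) μ := fun z =>
    hQ.integrable_comp_pair hX.measurable
      (fun p _ _ => hF _ (queueStep_mem _ _).1 (queueStep_mem _ _).2) (2 * n)
  simp only [hstep]
  rw [integral_comp_eq_sum_of_indepFun (f := fun p z => F (queueStep z.2 (queueStep z.1 p)))
      (hQ.measurable_pair hX.measurable (2 * n)) ((hX.measurable _).prodMk (hX.measurable _))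
      (hQ.indepFun_pair_increments hX.measurable hX.indep (2 * n)) (hX.ae_mem_cycleIncrements n)
      (fun _ _ => measurable_of_countable _) (fun z _ => hint z),
    integral_finsetSum _ fun z _ => hint z, Finset.mul_sum]
  exact Finset.sum_congr rfl fun z hz => by rw [hX.measureReal_cycleIncrements n hz]

theorem integral_killedWeight_sub_mul {G : ℤ → ℝ} {l : ℝ} {r : ℕ} (hG0 : G (-1) = G 0)
    (hGr : G (r - 1) + G r = 0) (hG : ∀ k, l / 4 * (G (k - 1) + 2 * G k + G (k + 1)) = G k - 1)
    (n : ℕ) :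
    ∫ ω, killedWeight r G (S (2 * n) ω, M (2 * n) ω) ∂μ -
        l * ∫ ω, killedWeight r G (S (2 * (n + 1)) ω, M (2 * (n + 1)) ω) ∂μ =
      μ.real {ω | M (2 * n) ω < r} := by
  have hB : ∀ p : ℤ × ℤ, 0 ≤ p.1 → p.1 ≤ p.2 → |killedWeight r G p| ≤ ∑ k ∈ Finset.range r, |G k| :=
    fun p => abs_killedWeight_le r G
  have hmeas : MeasurableSet {ω | M (2 * n) ω < r} :=
    (hQ.measurable_pair hX.measurable (2 * n)).snd measurableSet_Iio
  have hcycle : ∀ ω, l * (1 / 4) * ∑ z ∈ cycleIncrements,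
      killedWeight r G (queueStep z.2 (queueStep z.1 (S (2 * n) ω, M (2 * n) ω))) =
      killedWeight r G (S (2 * n) ω, M (2 * n) ω) - {ω | M (2 * n) ω < r}.indicator 1 ω :=
    fun ω => by
      rw [mul_one_div, sum_killedWeight_queueStep hG0 hGr hG (hQ.nonneg_and_le _ ω).1
        (hQ.nonneg_and_le _ ω).2]
      by_cases h : M (2 * n) ω < r <;> simp [killedWeight, h]
  have hind : Integrable ({ω | M (2 * n) ω < r}.indicator (1 : Ω → ℝ)) μ :=
    (integrable_const 1).indicator hmeas
  rw [integral_comp_pair_two_mul_succ hX hQ hB, ← mul_assoc, ← integral_const_mul]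
  simp only [hcycle]
  rw [integral_sub (hQ.integrable_comp_pair hX.measurable hB _) hind,
    integral_indicator_one hmeas]
  ring

theorem hasSum_pow_mul_measureReal_lt {G : ℤ → ℝ} {l : ℝ} {r : ℕ} (hr : 0 < r)
    (hG0 : G (-1) = G 0) (hGr : G (r - 1) + G r = 0)
    (hG : ∀ k, l / 4 * (G (k - 1) + 2 * G k + G (k + 1)) = G k - 1) (hl0 : 0 ≤ l) (hl1 : l < 1) :
    HasSum (fun n => l ^ n * μ.real {ω | M (2 * n) ω < r}) (G 0) := by
  set W : ℕ → ℝ := fun n => ∫ ω, killedWeight r G (S (2 * n) ω, M (2 * n) ω) ∂μ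
  set B := ∑ k ∈ Finset.range r, |G k|
  have hterm : ∀ n, l ^ n * W n - l ^ (n + 1) * W (n + 1) =
      l ^ n * μ.real {ω | M (2 * n) ω < r} :=
    fun n => by rw [← integral_killedWeight_sub_mul hX hQ hG0 hGr hG n]; ring
  have hW : ∀ n, |W n| ≤ B := fun n => by
    have h : ∀ ω, ‖killedWeight r G (S (2 * n) ω, M (2 * n) ω)‖ ≤ B := fun ω =>
      abs_killedWeight_le r G (hQ.nonneg_and_le (2 * n) ω).1 (hQ.nonneg_and_le (2 * n) ω).2
    simpa using norm_integral_le_of_norm_le_const (ae_of_all μ h)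
  have hanti : Antitone fun n => l ^ n * W n := antitone_nat_of_succ_le fun n => by
    rw [← sub_nonneg, hterm]
    positivity
  have hlim : Tendsto (fun n => l ^ n * W n) atTop (𝓝 0) := by
    refine squeeze_zero_norm (fun n => ?_)
      (by simpa using (tendsto_pow_atTop_nhds_zero_of_lt_one hl0 hl1).mul_const B)
    rw [norm_mul, norm_pow, Real.norm_of_nonneg hl0, Real.norm_eq_abs]
    exact mul_le_mul_of_nonneg_left (hW n) (pow_nonneg hl0 n)
  have hW0 : W 0 = G 0 := by
    simp [W, killedWeight, hQ.S_zero, hQ.M_zero, hr]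
  simpa [hterm, hW0] using hasSum_sub_succ_of_antitone hanti hlim

theorem hasSum_pow_mul_measureReal_le {x : ℝ} (hx0 : 0 < x) (hx1 : x < 1) {r : ℕ} (hr : 0 < r) :
    HasSum (fun n => (4 * x / (1 + x) ^ 2) ^ n * μ.real {ω | (r : ℤ) ≤ M (2 * n) ω})
      (2 * x ^ r / (1 + (x ^ r) ^ 2) / (1 - 4 * x / (1 + x) ^ 2)) := by
  have hl1 := four_mul_div_one_add_sq_lt_one hx0 hx1
  have hsurv := hasSum_pow_mul_measureReal_lt hX hQ hr (queueHarmonic_neg_one r)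
    (queueHarmonic_sub_one_add_self r hx0) (queueHarmonic_average r hx0 hx1.ne) (by positivity) hl1
  have hcompl : ∀ n, μ.real {ω | (r : ℤ) ≤ M (2 * n) ω} = 1 - μ.real {ω | M (2 * n) ω < r} :=
    fun n => by
      have hmeas : MeasurableSet {ω | M (2 * n) ω < r} :=
        (hQ.measurable_pair hX.measurable (2 * n)).snd measurableSet_Iio
      rw [← probReal_compl_eq_one_sub hmeas, compl_ofPred]
      simp only [not_lt]
  rw [← inv_one_sub_sub_queueHarmonic_zero r hx0]
  simpa [hcompl, mul_sub] using (hasSum_geometric_of_lt_one (by positivity) hl1).sub hsurv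

theorem hasSum_pow_mul_integral_runningMax {x : ℝ} (hx0 : 0 < x) (hx1 : x < 1) :
    HasSum (fun m => (4 * x / (1 + x) ^ 2) ^ m * ∫ ω, (M (2 * m) ω : ℝ) ∂μ)
      (phi x / (1 - 4 * x / (1 + x) ^ 2)) := by
  set l := 4 * x / (1 + x) ^ 2
  set q : ℕ → ℕ → ℝ := fun k m => l ^ m * μ.real {ω | ((k + 1 : ℕ) : ℤ) ≤ M (2 * m) ω}
  have hrows : ∀ k, HasSum (q k) (2 * x ^ (k + 1) / (1 + (x ^ (k + 1)) ^ 2) / (1 - l)) :=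
    fun k => hasSum_pow_mul_measureReal_le hX hQ hx0 hx1 k.succ_pos
  have hcols : ∀ m, HasSum (fun k => q k m) (l ^ m * ∫ ω, (M (2 * m) ω : ℝ) ∂μ) := fun m => by
    refine (hasSum_measureReal_le_integral (hQ.measurable_pair hX.measurable (2 * m)).snd
      (K := 2 * m) ?_).mul_left _
    filter_upwards [hX.ae_le_one] with ω hω
    exact ⟨(hQ.nonneg_and_le _ ω).1.trans (hQ.nonneg_and_le _ ω).2,
      (hQ.le_of_increment_le_one hω _).2⟩
  have hrowsum := (summable_phi hx0 hx1).hasSum.div_const (1 - l)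
  have hq : Summable (Function.uncurry q) :=
    (summable_prod_of_nonneg fun p => mul_nonneg (by positivity) measureReal_nonneg).2
      ⟨fun k => (hrows k).summable, hrowsum.summable.congr fun k => (hrows k).tsum_eq.symm⟩
  have htot : HasSum (Function.uncurry q) (phi x / (1 - l)) :=
    hrowsum.unique (hq.hasSum.prod_fiberwise hrows) ▸ hq.hasSum
  exact ((Equiv.prodComm ℕ ℕ).hasSum_iff.2 htot).prod_fiberwise hcols

end Cycle

theorem four_mul_div_one_add_sq_sqrt {l : ℝ} (hl : l ≤ 1) :
    4 * ((1 - √(1 - l)) / (1 + √(1 - l))) / (1 + (1 - √(1 - l)) / (1 + √(1 - l))) ^ 2 = l := by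
  have ht := sq_sqrt (sub_nonneg.2 hl)
  have : 0 ≤ √(1 - l) := sqrt_nonneg _
  field_simp
  linear_combination -4 * ht

theorem tendsto_sqrt_mul_phi :
    Tendsto (fun l => √(1 - l) * phi ((1 - √(1 - l)) / (1 + √(1 - l)))) (𝓝[<] 1) (𝓝 (π / 4)) := by
  have ht : Tendsto (fun l : ℝ => √(1 - l)) (𝓝[<] 1) (𝓝[>] 0) := by
    refine tendsto_nhdsWithin_of_tendsto_nhds_of_eventually_within _ ?_ ?_
    · exact ((continuous_const.sub continuous_id).sqrt.tendsto' 1 0 (by simp)).mono_left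
        nhdsWithin_le_nhds
    · filter_upwards [self_mem_nhdsWithin] with l (hl : l < 1)
      exact sqrt_pos.2 (sub_pos.2 hl)
  have hx : Tendsto (fun t : ℝ => (1 - t) / (1 + t)) (𝓝[>] 0) (𝓝[<] 1) := by
    have h : Tendsto (fun t : ℝ => (1 - t) / (1 + t)) (𝓝 0) (𝓝 1) := by
      have : ContinuousAt (fun t : ℝ => (1 - t) / (1 + t)) 0 := by fun_prop (disch := norm_num)
      simpa using this.tendsto
    refine tendsto_nhdsWithin_of_tendsto_nhds_of_eventually_within _
      (h.mono_left nhdsWithin_le_nhds) ?_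
    filter_upwards [self_mem_nhdsWithin] with t (ht : 0 < t)
    exact (div_lt_one (by linarith : (0 : ℝ) < 1 + t)).2 (by linarith)
  have hlim : Tendsto (fun x => (1 - x) * phi x / (1 + x)) (𝓝[<] 1) (𝓝 (π / 2 / (1 + 1))) :=
    tendsto_one_sub_mul_phi.div ((tendsto_const_nhds.add tendsto_id).mono_left nhdsWithin_le_nhds)
      (by norm_num)
  rw [show π / 4 = π / 2 / (1 + 1) by ring]
  refine ((hlim.comp hx).comp ht).congr' ?_
  filter_upwards [self_mem_nhdsWithin] with l (hl : l < 1)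
  have : 0 < √(1 - l) := sqrt_pos.2 (sub_pos.2 hl)
  simp only [Function.comp_apply]
  field_simp
  ring

/-- Symmetric case: Abel-type limit
lim_{λ→1⁻} (1-λ)^{3/2} Σ_{n≥1} λⁿ E(M_{2n}) = π/4,
i.e. E(M_{2n})/√(2n) → √(π/8) in the Abel sense. -/
theorem maxQueue_symmetric_mean_abel_limit
    {Ω : Type*} [MeasurableSpace Ω] (μ : Measure Ω) [IsProbabilityMeasure μ]
    (X : ℕ → Ω → ℤ) (hXmeas : ∀ i, Measurable (X i))
    (hXindep : iIndepFun X μ)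
    (hXodd : ∀ i : ℕ, Odd i →
      μ {ω | X i ω = 1} = 1 / 2 ∧ μ {ω | X i ω = 0} = 1 / 2)
    (hXeven : ∀ i : ℕ, 1 ≤ i → Even i →
      μ {ω | X i ω = 0} = 1 / 2 ∧ μ {ω | X i ω = -1} = 1 / 2)
    (S : ℕ → Ω → ℤ) (hS0 : ∀ ω, S 0 ω = 0)
    (hS : ∀ (j : ℕ) (ω : Ω), S (j + 1) ω = max (S j ω + X (j + 1) ω) 0)
    (M : ℕ → Ω → ℤ) (hM0 : ∀ ω, M 0 ω = S 0 ω)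
    (hM : ∀ (n : ℕ) (ω : Ω), M (n + 1) ω = max (M n ω) (S (n + 1) ω)) :
    Tendsto
      (fun l : ℝ =>
        (1 - l) ^ ((3 : ℝ) / 2)
          * ∑' n : ℕ, l ^ (n + 1) * ∫ ω, ((M (2 * (n + 1)) ω : ℤ) : ℝ) ∂μ)
      (nhdsWithin 1 (Set.Iio 1)) (nhds (π / 4)) := by
  have hX : IsTrafficLight μ X := ⟨hXmeas, hXindep, hXodd, hXeven⟩
  have hQ : IsQueueProcess X S M := ⟨hS0, hS, hM0, hM⟩
  refine tendsto_sqrt_mul_phi.congr' ?_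
  filter_upwards [Ioo_mem_nhdsLT zero_lt_one] with l ⟨hl0, hl1⟩
  have ht0 : 0 < √(1 - l) := sqrt_pos.2 (sub_pos.2 hl1)
  have ht1 : √(1 - l) < 1 := by rw [sqrt_lt' one_pos]; linarith
  have hsum := (hasSum_nat_add_iff' 1).2 (hasSum_pow_mul_integral_runningMax hX hQ
    (x := (1 - √(1 - l)) / (1 + √(1 - l))) (div_pos (sub_pos.2 ht1) (by positivity))
    ((div_lt_one (by positivity)).2 (by linarith)))
  rw [four_mul_div_one_add_sq_sqrt hl1.le] at hsum
  simp only [Finset.range_one, Finset.sum_singleton, pow_zero, mul_zero, hQ.M_zero, hQ.S_zero,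
    Int.cast_zero, integral_zero, sub_zero] at hsum
  rw [hsum.tsum_eq, show (3 : ℝ) / 2 = 1 + 1 / 2 by norm_num, rpow_add (sub_pos.2 hl1), rpow_one,
    ← sqrt_eq_rpow]
  field_simp
end

section
/- As t → 0⁺, the quantity t² · Σ_{a=1}^∞ a·sech(a·t) converges to ∫₀^∞ b·sech(b) db = 2G, where G = Σ_{k≥0} (-1)^k/(2k+1)² is Catalan's constant and sech(x) = 2/(e^x + e^{-x}). -/
/-!
For `x > 0`, `sech x = 2 ∑ₙ (-1)ⁿ e^{-(2n+1)x}`. Integrating termwise against `b`, with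
`∫₀^∞ b e^{-(2n+1)b} db = 1/(2n+1)²`, gives `∫₀^∞ b sech b db = 2 ∑ₙ (-1)ⁿ/(2n+1)²`.
In `t² ∑ₐ a sech(at)`, exchanging the two summations and using `∑ₐ a e^{-as} = (2 sinh(s/2))⁻²`
leaves `∑ₙ 2(-1)ⁿ/(2n+1)² · (u/sinh u)²` with `u = (2n+1)t/2`. Since `0 ≤ u/sinh u ≤ 1` and
`u/sinh u → 1` as `u → 0`, Tannery's theorem gives the limit.
-/

open Filter Real

open Set MeasureTheory Topology

theorem hasSum_sech {x : ℝ} (hx : 0 < x) :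
    HasSum (fun n : ℕ => 2 * (-1 : ℝ) ^ n * exp (-((2 * n + 1) * x)))
      (2 / (exp x + exp (-x))) := by
  have hr : ‖-exp (-(2 * x))‖ < 1 := by
    rw [norm_neg, norm_of_nonneg (exp_pos _).le, exp_lt_one_iff]
    linarith
  have hsum : 2 * exp (-x) * (1 - -exp (-(2 * x)))⁻¹ = 2 / (exp x + exp (-x)) := by
    have : exp x * exp (-x) = 1 := by rw [← exp_add]; simp
    rw [sub_neg_eq_add, show -(2 * x) = -x + -x by ring, exp_add, eq_div_iff (by positivity)]
    field_simp
    linear_combination this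
  refine hsum ▸ ((hasSum_geometric_of_norm_lt_one hr).mul_left (2 * exp (-x))).congr_fun
    fun n => ?_
  rw [neg_pow (exp _), ← exp_nat_mul, mul_mul_mul_comm, ← exp_add]
  ring_nf

theorem two_mul_sinh_half_sq (s : ℝ) : (2 * sinh (s / 2)) ^ 2 = exp s - 2 + exp (-s) := by
  have h1 : exp (s / 2) ^ 2 = exp s := by rw [← exp_nat_mul]; ring_nf
  have h2 : exp (-(s / 2)) ^ 2 = exp (-s) := by rw [← exp_nat_mul]; ring_nf
  have h3 : exp (s / 2) * exp (-(s / 2)) = 1 := by rw [← exp_add]; simp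
  rw [sinh_eq]; linear_combination h1 + h2 - 2 * h3

theorem hasSum_succ_mul_exp_neg {s : ℝ} (hs : 0 < s) :
    HasSum (fun a : ℕ => ((a : ℝ) + 1) * exp (-((a + 1) * s)))
      ((2 * sinh (s / 2))⁻¹ ^ 2) := by
  have hq : exp (-s) < 1 := by rw [exp_lt_one_iff]; linarith
  have hsum : exp (-s) / (1 - exp (-s)) ^ 2 = (2 * sinh (s / 2))⁻¹ ^ 2 := by
    have he : exp s * exp (-s) = 1 := by rw [← exp_add]; simp
    have hsinh : 2 * sinh (s / 2) ≠ 0 := by have := sinh_pos_iff.mpr (half_pos hs); positivity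
    have h1q : 1 - exp (-s) ≠ 0 := by linarith
    rw [inv_pow, ← one_div, eq_div_iff (pow_ne_zero 2 hsinh), two_mul_sinh_half_sq]
    field_simp
    linear_combination he
  have h := (hasSum_nat_add_iff' (f := fun m : ℕ => (m : ℝ) * exp (-s) ^ m) 1).mpr
    (hasSum_coe_mul_geometric_of_norm_lt_one (by rwa [norm_of_nonneg (exp_pos _).le]))
  simp only [Finset.range_one, Finset.sum_singleton, Nat.cast_zero, zero_mul, sub_zero] at h
  refine hsum ▸ h.congr_fun fun a => ?_
  rw [← exp_nat_mul]; push_cast; ring_nf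

theorem div_sinh_le_one {s : ℝ} (hs : 0 ≤ s) : s / sinh s ≤ 1 := by
  rcases hs.eq_or_lt with rfl | hs
  · simp
  · exact div_le_one_of_le₀ (self_le_sinh_iff.mpr hs.le) (sinh_pos_iff.mpr hs).le

theorem sq_div_sinh_le_one {s : ℝ} (hs : 0 ≤ s) : (s / sinh s) ^ 2 ≤ 1 :=
  pow_le_one₀ (div_nonneg hs (sinh_nonneg_iff.mpr hs)) (div_sinh_le_one hs)

theorem tendsto_div_sinh_nhdsNE_zero : Tendsto (fun s => s / sinh s) (𝓝[≠] 0) (𝓝 1) := by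
  have h := hasDerivAt_iff_tendsto_slope.mp (hasDerivAt_sinh 0)
  rw [cosh_zero] at h
  simpa [slope_def_field] using h.inv₀ one_ne_zero

theorem summable_two_div_two_mul_add_one_sq :
    Summable (fun n : ℕ => 2 / (2 * (n : ℝ) + 1) ^ 2) := by
  have h := (Real.summable_one_div_nat_add_rpow (1 / 2) 2).mpr one_lt_two
  refine (h.mul_left (1 / 2)).congr fun n => ?_
  rw [abs_of_pos (by positivity), rpow_two]
  field_simp

theorem integral_mul_exp_neg_mul {c : ℝ} (hc : 0 < c) :
    ∫ b in Ioi (0 : ℝ), b * exp (-(c * b)) = 1 / c ^ 2 := by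
  have h := integral_rpow_mul_exp_neg_mul_Ioi two_pos hc
  norm_num [Gamma_two] at h
  simpa using h

theorem integrableOn_mul_exp_neg_mul {c : ℝ} (hc : 0 < c) :
    IntegrableOn (fun b => b * exp (-(c * b))) (Ioi 0) := by
  simpa using integrableOn_rpow_mul_exp_neg_mul_rpow (p := 1) (s := 1) (by norm_num) one_pos hc

theorem integral_mul_sech :
    ∫ b in Ioi (0 : ℝ), b * (2 / (exp b + exp (-b))) =
      ∑' n : ℕ, 2 * (-1 : ℝ) ^ n / (2 * n + 1) ^ 2 := by
  set F : ℕ → ℝ → ℝ := fun n b => 2 * (-1 : ℝ) ^ n * (b * exp (-((2 * n + 1) * b)))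
  have hc (n : ℕ) : (0 : ℝ) < 2 * n + 1 := by positivity
  have hF_int (n : ℕ) : IntegrableOn (F n) (Ioi 0) :=
    (integrableOn_mul_exp_neg_mul (hc n)).const_mul _
  have hF_integral (n : ℕ) : ∫ b in Ioi 0, F n b = 2 * (-1 : ℝ) ^ n / (2 * n + 1) ^ 2 := by
    rw [integral_const_mul, integral_mul_exp_neg_mul (hc n), mul_one_div]
  have hF_norm (n : ℕ) : ∫ b in Ioi 0, ‖F n b‖ = 2 / (2 * n + 1) ^ 2 := by
    rw [setIntegral_congr_fun measurableSet_Ioi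
      (g := fun b => 2 * (b * exp (-((2 * n + 1) * b))))
      fun b (hb : 0 < b) => by simp [F, abs_of_pos hb], integral_const_mul,
      integral_mul_exp_neg_mul (hc n), mul_one_div]
  have hF_sum : Summable fun n => ∫ b in Ioi 0, ‖F n b‖ :=
    summable_two_div_two_mul_add_one_sq.congr fun n => (hF_norm n).symm
  calc ∫ b in Ioi (0 : ℝ), b * (2 / (exp b + exp (-b)))
      = ∫ b in Ioi (0 : ℝ), ∑' n, F n b :=
        setIntegral_congr_fun measurableSet_Ioi fun b (hb : 0 < b) => by
          rw [← ((hasSum_sech hb).mul_left b).tsum_eq]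
          exact tsum_congr fun n => by ring
    _ = ∑' n : ℕ, 2 * (-1 : ℝ) ^ n / (2 * n + 1) ^ 2 := by
      rw [← integral_tsum_of_summable_integral_norm hF_int hF_sum]
      exact tsum_congr hF_integral

noncomputable def sechSumTerm (t : ℝ) (n : ℕ) : ℝ :=
  2 * (-1 : ℝ) ^ n / (2 * n + 1) ^ 2 * ((2 * n + 1) * t / 2 / sinh ((2 * n + 1) * t / 2)) ^ 2

theorem norm_sechSumTerm_le {t : ℝ} (ht : 0 ≤ t) (n : ℕ) :
    ‖sechSumTerm t n‖ ≤ 2 / (2 * n + 1) ^ 2 := by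
  rw [sechSumTerm, norm_eq_abs, abs_mul, abs_div, abs_mul, abs_pow, abs_neg, abs_one, one_pow,
    mul_one, abs_two, abs_of_nonneg (sq_nonneg _), abs_of_nonneg (sq_nonneg _)]
  exact mul_le_of_le_one_right (by positivity) (sq_div_sinh_le_one (by positivity))

theorem tendsto_sechSumTerm (n : ℕ) :
    Tendsto (sechSumTerm · n) (𝓝[>] 0) (𝓝 (2 * (-1 : ℝ) ^ n / (2 * n + 1) ^ 2)) := by
  have harg : Tendsto (fun t : ℝ => (2 * n + 1) * t / 2) (𝓝[>] 0) (𝓝[≠] 0) := by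
    refine tendsto_nhdsWithin_iff.mpr ⟨tendsto_nhdsWithin_of_tendsto_nhds ?_,
      eventually_mem_nhdsWithin.mono fun t (ht : 0 < t) => ?_⟩
    · exact (by fun_prop : Continuous fun t : ℝ => (2 * n + 1) * t / 2).tendsto' 0 0 (by simp)
    · exact (by positivity : (0 : ℝ) < (2 * n + 1) * t / 2).ne'
  simpa [sechSumTerm] using
    ((tendsto_div_sinh_nhdsNE_zero.comp harg).pow 2).const_mul _

theorem sq_mul_tsum_succ_mul_sech {t : ℝ} (ht : 0 < t) :
    t ^ 2 * ∑' a : ℕ, ((a : ℝ) + 1) * (2 / (exp ((a + 1) * t) + exp (-((a + 1) * t)))) =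
      ∑' n : ℕ, sechSumTerm t n := by
  set G : ℕ → ℕ → ℝ := fun n a =>
    2 * t ^ 2 * (((a : ℝ) + 1) * exp (-((2 * n + 1) * ((a + 1) * t))))
  set F : ℕ → ℕ → ℝ := fun n a => (-1 : ℝ) ^ n * G n a
  have hc (n : ℕ) : (0 : ℝ) < 2 * n + 1 := by positivity
  have hG_row (n : ℕ) : HasSum (G n)
      (2 / (2 * n + 1) ^ 2 * ((2 * n + 1) * t / 2 / sinh ((2 * n + 1) * t / 2)) ^ 2) := by
    have hsinh : sinh ((2 * n + 1) * t / 2) ≠ 0 :=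
      (sinh_pos_iff.mpr (by have := hc n; positivity)).ne'
    refine (((hasSum_succ_mul_exp_neg (mul_pos (hc n) ht)).mul_left (2 * t ^ 2)).congr_fun
      fun a => by simp only [G]; ring_nf).trans_eq ?_
    field_simp
  have hG_nonneg (n a : ℕ) : 0 ≤ G n a := by positivity
  have hG_bound (n : ℕ) : ∑' a, G n a ≤ 2 / (2 * n + 1) ^ 2 := by
    rw [(hG_row n).tsum_eq]
    exact mul_le_of_le_one_right (by positivity)
      (sq_div_sinh_le_one (by have := hc n; positivity))
  have hG : Summable (Function.uncurry G) := by
    refine (summable_prod_of_nonneg fun p => hG_nonneg p.1 p.2).mpr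
      ⟨fun n => (hG_row n).summable, ?_⟩
    exact (summable_two_div_two_mul_add_one_sq.of_nonneg_of_le
      (fun n => tsum_nonneg (hG_nonneg n)) hG_bound)
  have hF : Summable (Function.uncurry F) :=
    hG.of_norm_bounded fun ⟨n, a⟩ => by simp [F, abs_of_nonneg (hG_nonneg n a)]
  have hF_col (a : ℕ) : HasSum (fun n => F n a)
      (t ^ 2 * ((a : ℝ) + 1) * (2 / (exp ((a + 1) * t) + exp (-((a + 1) * t))))) :=
    ((hasSum_sech (by positivity : (0 : ℝ) < (a + 1) * t)).mul_left
      (t ^ 2 * ((a : ℝ) + 1))).congr_fun fun n => by simp only [F, G]; ring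
  calc t ^ 2 * ∑' a : ℕ, ((a : ℝ) + 1) * (2 / (exp ((a + 1) * t) + exp (-((a + 1) * t))))
      = ∑' a, ∑' n, F n a := by
        rw [← tsum_mul_left]
        exact tsum_congr fun a => by rw [← mul_assoc, (hF_col a).tsum_eq]
    _ = ∑' n, ∑' a, F n a := hF.tsum_comm
    _ = ∑' n, sechSumTerm t n :=
        tsum_congr fun n => by rw [tsum_mul_left, (hG_row n).tsum_eq, sechSumTerm]; ring

/-- As t → 0⁺, t²·Σ_{a≥1} a·sech(a t) → ∫₀^∞ b·sech(b) db = 2G,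
where G is Catalan's constant and sech(x) = 2/(eˣ + e⁻ˣ). -/
theorem sech_weighted_riemann_sum_limit :
    Tendsto
      (fun t : ℝ =>
        t ^ 2 * ∑' a : ℕ,
          ((a : ℝ) + 1) * (2 / (Real.exp (((a : ℝ) + 1) * t) + Real.exp (-(((a : ℝ) + 1) * t)))))
      (nhdsWithin 0 (Set.Ioi 0))
      (nhds (2 * ∑' k : ℕ, (-1 : ℝ) ^ k / (2 * (k : ℝ) + 1) ^ 2)) ∧
    ∫ b in Set.Ioi (0 : ℝ), b * (2 / (Real.exp b + Real.exp (-b)))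
      = 2 * ∑' k : ℕ, (-1 : ℝ) ^ k / (2 * (k : ℝ) + 1) ^ 2 := by
  have hcatalan : ∑' n : ℕ, 2 * (-1 : ℝ) ^ n / (2 * n + 1) ^ 2 =
      2 * ∑' k : ℕ, (-1 : ℝ) ^ k / (2 * (k : ℝ) + 1) ^ 2 := by
    rw [← tsum_mul_left]
    exact tsum_congr fun n => by ring
  refine ⟨?_, integral_mul_sech.trans hcatalan⟩
  rw [← hcatalan]
  refine (tendsto_tsum_of_dominated_convergence summable_two_div_two_mul_add_one_sq
    tendsto_sechSumTerm ?_).congr' ?_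
  · filter_upwards [self_mem_nhdsWithin] with t (ht : 0 < t) using norm_sechSumTerm_le ht.le
  · filter_upwards [self_mem_nhdsWithin] with t (ht : 0 < t) using
      (sq_mul_tsum_succ_mul_sech ht).symm
end

section
/- Assume 0 < p < 1/2 (so p < q). For every integer x ≥ 0, the distribution of the reflected walk at the end of light cycles converges: lim_{m→∞} P(S_{2m} = x) = (q - p)·p^{2x} / q^{2x+2}. In particular the limiting distribution is geometric with ratio p²/q², and its probability generating function is H(z) = (q - p)/(q² - p²z). -/
open MeasureTheory ProbabilityTheory Filter Topology

/-!
Write `F m x = P(S_{2m} ≥ x)`. The two steps of a light cycle are independent of `S_{2m}`, and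
for `x ≥ 0` conditioning on them gives
`F (m+1) (x+1) = p² F m x + 2pq F m (x+1) + q² F m (x+2)`, with `F m 0 = 1` and `F 0 (x+1) = 0`.
Since `r ^ x` with `r = p²/q²` solves the stationary equation, induction on `m` shows that `F m x`
is nondecreasing in `m` and bounded by `r ^ x`. Hence it converges to a stationary solution `G`
with `G 0 = 1` and `0 ≤ G x ≤ r ^ x`. The characteristic roots of the stationary recurrence are
`1` and `r`, and decay at infinity rules out the constant mode, so `G x = r ^ x` and
`P(S_{2m} = x) → r ^ x - r ^ (x+1)`.
-/

section StationaryTail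

variable {a b c : ℝ}

theorem stationary_div_pow (hc : c ≠ 0) (habc : a + b + c = 1) (x : ℕ) :
    a * (a / c) ^ x + b * (a / c) ^ (x + 1) + c * (a / c) ^ (x + 2) = (a / c) ^ (x + 1) := by
  set r := a / c
  have ha : a = c * r := (mul_div_cancel₀ a hc).symm
  rw [ha] at habc ⊢
  linear_combination r ^ (x + 1) * habc

theorem eq_div_pow_of_stationary {G : ℕ → ℝ} (ha : 0 ≤ a) (hac : a < c) (habc : a + b + c = 1)
    (hG0 : G 0 = 1) (hG : ∀ x, G (x + 1) = a * G x + b * G (x + 1) + c * G (x + 2))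
    (hlim : Tendsto G atTop (𝓝 0)) (x : ℕ) : G x = (a / c) ^ x := by
  set r := a / c
  have hc : 0 < c := ha.trans_lt hac
  have hincr : ∀ x, G (x + 1) - G x = r ^ x * (G 1 - 1) := by
    intro x
    induction x with
    | zero => simp [hG0]
    | succ x ih =>
      have hstep : G (x + 2) - G (x + 1) = r * (G (x + 1) - G x) := by
        rw [div_mul_eq_mul_div, eq_div_iff hc.ne']
        linear_combination -hG x - G (x + 1) * habc
      rw [hstep, ih]
      ring
  have hsum : ∀ n, G n = 1 + (G 1 - 1) * ∑ i ∈ Finset.range n, r ^ i := by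
    intro n
    have := Finset.sum_range_sub G n
    rw [Finset.sum_congr rfl fun i _ => hincr i, ← Finset.sum_mul, hG0] at this
    linear_combination -this
  have hG1 : G 1 - 1 = r - 1 := by
    have hgeom := hasSum_geometric_of_lt_one (div_nonneg ha hc.le) ((div_lt_one hc).2 hac)
    have hlim' : Tendsto G atTop (𝓝 (1 + (G 1 - 1) * (1 - r)⁻¹)) :=
      ((hgeom.tendsto_sum_nat.const_mul _).const_add 1).congr fun n => (hsum n).symm
    have h1r : 1 - r ≠ 0 := by linarith [(div_lt_one hc).2 hac]
    have := tendsto_nhds_unique hlim' hlim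
    field_simp at this
    linarith
  rw [hsum, hG1, mul_comm, geom_sum_mul]
  ring

variable {F : ℕ → ℕ → ℝ}

theorem tail_nonneg (ha : 0 ≤ a) (hb : 0 ≤ b) (hc : 0 ≤ c) (hF0 : ∀ m, F m 0 = 1)
    (hF_init : ∀ x, F 0 (x + 1) = 0)
    (hF : ∀ m x, F (m + 1) (x + 1) = a * F m x + b * F m (x + 1) + c * F m (x + 2))
    (m x : ℕ) : 0 ≤ F m x := by
  induction m generalizing x with
  | zero => cases x <;> simp [hF0, hF_init]
  | succ m ih =>
    cases x with
    | zero => simp [hF0]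
    | succ x => rw [hF]; have := ih x; have := ih (x + 1); have := ih (x + 2); positivity

theorem tail_monotone (ha : 0 ≤ a) (hb : 0 ≤ b) (hc : 0 ≤ c) (hF0 : ∀ m, F m 0 = 1)
    (hF_init : ∀ x, F 0 (x + 1) = 0)
    (hF : ∀ m x, F (m + 1) (x + 1) = a * F m x + b * F m (x + 1) + c * F m (x + 2))
    (x : ℕ) : Monotone (F · x) := by
  refine monotone_nat_of_le_succ fun m => ?_
  induction m generalizing x with
  | zero =>
    cases x with
    | zero => simp [hF0]
    | succ x => rw [hF_init]; exact tail_nonneg ha hb hc hF0 hF_init hF 1 (x + 1)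
  | succ m ih =>
    cases x with
    | zero => simp [hF0]
    | succ x =>
      rw [hF m, hF (m + 1)]
      gcongr <;> apply ih

theorem tail_le_pow (ha : 0 ≤ a) (hb : 0 ≤ b) (hc : 0 < c) (habc : a + b + c = 1)
    (hF0 : ∀ m, F m 0 = 1) (hF_init : ∀ x, F 0 (x + 1) = 0)
    (hF : ∀ m x, F (m + 1) (x + 1) = a * F m x + b * F m (x + 1) + c * F m (x + 2))
    (m x : ℕ) : F m x ≤ (a / c) ^ x := by
  induction m generalizing x with
  | zero => cases x <;> simp [hF0, hF_init]; positivity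
  | succ m ih =>
    cases x with
    | zero => simp [hF0]
    | succ x =>
      rw [hF, ← stationary_div_pow hc.ne' habc]
      gcongr <;> apply ih

theorem tendsto_tail_pow (ha : 0 ≤ a) (hb : 0 ≤ b) (hac : a < c) (habc : a + b + c = 1)
    (hF0 : ∀ m, F m 0 = 1) (hF_init : ∀ x, F 0 (x + 1) = 0)
    (hF : ∀ m x, F (m + 1) (x + 1) = a * F m x + b * F m (x + 1) + c * F m (x + 2))
    (x : ℕ) : Tendsto (F · x) atTop (𝓝 ((a / c) ^ x)) := by
  have hc : 0 < c := ha.trans_lt hac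
  have hnonneg := tail_nonneg ha hb hc.le hF0 hF_init hF
  have hle := tail_le_pow ha hb hc habc hF0 hF_init hF
  set G : ℕ → ℝ := fun x => ⨆ m, F m x
  have hconv : ∀ x, Tendsto (F · x) atTop (𝓝 (G x)) := fun x =>
    tendsto_atTop_ciSup (tail_monotone ha hb hc.le hF0 hF_init hF x)
      ⟨_, Set.forall_mem_range.2 (hle · x)⟩
  suffices G = fun x => (a / c) ^ x by simpa [this] using hconv x
  funext x
  refine eq_div_pow_of_stationary ha hac habc ?_ (fun x => ?_) ?_ x
  · exact tendsto_nhds_unique (hconv 0) (by simp [hF0])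
  · refine tendsto_nhds_unique ((hconv (x + 1)).comp (tendsto_add_atTop_nat 1)) ?_
    simp only [Function.comp_def, hF]
    exact (((hconv x).const_mul a).add ((hconv (x + 1)).const_mul b)).add
      ((hconv (x + 2)).const_mul c)
  · refine squeeze_zero (fun x => ge_of_tendsto' (hconv x) (hnonneg · x))
      (fun x => le_of_tendsto' (hconv x) (hle · x)) ?_
    exact tendsto_pow_atTop_nhds_zero_of_lt_one (div_nonneg ha hc.le) ((div_lt_one hc).2 hac)

end StationaryTail

section TwoValuedIncrement

variable {Ω : Type*} [MeasurableSpace Ω] {μ : Measure Ω}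

theorem ae_eq_or_eq_of_measure_add_eq_one [IsProbabilityMeasure μ] {Z : Ω → ℤ}
    (hZ : Measurable Z) {a b : ℤ} (hab : a ≠ b) (h : μ {ω | Z ω = a} + μ {ω | Z ω = b} = 1) :
    ∀ᵐ ω ∂μ, Z ω = a ∨ Z ω = b := by
  have hA : MeasurableSet {ω | Z ω = a} := hZ (measurableSet_singleton a)
  have hB : MeasurableSet {ω | Z ω = b} := hZ (measurableSet_singleton b)
  have hdisj : Disjoint {ω | Z ω = a} {ω | Z ω = b} :=
    Set.disjoint_left.2 fun ω ha hb => hab (ha.symm.trans hb)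
  exact (prob_compl_eq_zero_iff (hA.union hB)).2 (by rw [measure_union hdisj hB, h])

theorem measureReal_le_max_add_zero [IsFiniteMeasure μ] {Y Z : Ω → ℤ} (hY : Measurable Y)
    (hZ : Measurable Z) (hYZ : IndepFun Y Z μ) {a b : ℤ} (hab : a ≠ b)
    (hZab : ∀ᵐ ω ∂μ, Z ω = a ∨ Z ω = b) {x : ℤ} (hx : 1 ≤ x) :
    μ.real {ω | x ≤ max (Y ω + Z ω) 0} =
      μ.real {ω | x - a ≤ Y ω} * μ.real {ω | Z ω = a} +
        μ.real {ω | x - b ≤ Y ω} * μ.real {ω | Z ω = b} := by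
  have hsplit : {ω | x ≤ max (Y ω + Z ω) 0} =ᵐ[μ]
      (({ω | x - a ≤ Y ω} ∩ {ω | Z ω = a}) ∪ ({ω | x - b ≤ Y ω} ∩ {ω | Z ω = b}) : Set Ω) := by
    refine eventuallyEq_set.2 ?_
    filter_upwards [hZab] with ω hω
    rcases hω with h | h <;> simp [h, hab, hab.symm] <;> omega
  have hdisj :
      Disjoint ({ω | x - a ≤ Y ω} ∩ {ω | Z ω = a}) ({ω | x - b ≤ Y ω} ∩ {ω | Z ω = b}) :=
    Set.disjoint_left.2 fun ω ha hb => hab (ha.2.symm.trans hb.2)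
  rw [measureReal_congr hsplit,
    measureReal_union hdisj ((hY measurableSet_Ici).inter (hZ (measurableSet_singleton b)))]
  have hprod : ∀ c, μ.real ({ω | x - c ≤ Y ω} ∩ {ω | Z ω = c}) =
      μ.real {ω | x - c ≤ Y ω} * μ.real {ω | Z ω = c} := fun c => by
    simp only [measureReal_def, ← ENNReal.toReal_mul]
    exact congrArg _ (hYZ.measure_inter_preimage_eq_mul _ _ measurableSet_Ici
      (measurableSet_singleton c))
  rw [hprod, hprod]

theorem measureReal_eq_sub_measureReal_le [IsFiniteMeasure μ] {Y : Ω → ℤ} (hY : Measurable Y)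
    (x : ℤ) : μ.real {ω | Y ω = x} = μ.real {ω | x ≤ Y ω} - μ.real {ω | x + 1 ≤ Y ω} := by
  have hunion : {ω | x ≤ Y ω} = {ω | Y ω = x} ∪ {ω | x + 1 ≤ Y ω} := by
    ext ω; simp only [Set.mem_ofPred_eq, Set.mem_union]; omega
  have hdisj : Disjoint {ω | Y ω = x} {ω | x + 1 ≤ Y ω} :=
    Set.disjoint_left.2 fun ω h h' => by simp only [Set.mem_ofPred_eq] at h h'; omega
  rw [hunion, measureReal_union hdisj (hY measurableSet_Ici)]
  ring

end TwoValuedIncrement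

section ReflectedWalk

variable {Ω : Type*} {X S : ℕ → Ω → ℤ}

theorem reflectedWalk_nonneg (hS0 : ∀ ω, S 0 ω = 0)
    (hS : ∀ j ω, S (j + 1) ω = max (S j ω + X (j + 1) ω) 0) (j : ℕ) (ω : Ω) : 0 ≤ S j ω := by
  cases j with
  | zero => rw [hS0]
  | succ j => rw [hS]; exact le_max_right _ _

theorem measurable_reflectedWalk_past (hS0 : ∀ ω, S 0 ω = 0)
    (hS : ∀ j ω, S (j + 1) ω = max (S j ω + X (j + 1) ω) 0) (j : ℕ) :
    Measurable[⨆ i ∈ Set.Iic j, MeasurableSpace.comap (X i) inferInstance] (S j) := by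
  induction j with
  | zero => rw [funext hS0]; exact measurable_const
  | succ j ih =>
    have hX : Measurable[⨆ i ∈ Set.Iic (j + 1), MeasurableSpace.comap (X i) inferInstance]
        (X (j + 1)) :=
      measurable_iff_comap_le.2
        (le_biSup (fun i => MeasurableSpace.comap (X i) _) (Set.mem_Iic.2 le_rfl))
    have hpast := ih.mono (biSup_mono fun i (hi : i ≤ j) => hi.trans j.le_succ) le_rfl
    rw [funext (hS j)]
    exact (hpast.add hX).max measurable_const

variable [MeasurableSpace Ω] {μ : Measure Ω}

theorem measurable_reflectedWalk (hX : ∀ i, Measurable (X i)) (hS0 : ∀ ω, S 0 ω = 0)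
    (hS : ∀ j ω, S (j + 1) ω = max (S j ω + X (j + 1) ω) 0) (j : ℕ) : Measurable (S j) :=
  (measurable_reflectedWalk_past hS0 hS j).mono (iSup₂_le fun i _ => (hX i).comap_le) le_rfl

theorem indepFun_reflectedWalk_succ (hX : ∀ i, Measurable (X i)) (hXindep : iIndepFun X μ)
    (hS0 : ∀ ω, S 0 ω = 0) (hS : ∀ j ω, S (j + 1) ω = max (S j ω + X (j + 1) ω) 0) (j : ℕ) :
    IndepFun (S j) (X (j + 1)) μ := by
  have hindep := indep_biSup_compl (fun i => (hX i).comap_le) hXindep.iIndep (Set.Iic j)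
  rw [IndepFun_iff_Indep]
  refine indep_of_indep_of_le_right (indep_of_indep_of_le_left hindep ?_) ?_
  · exact (measurable_reflectedWalk_past hS0 hS j).comap_le
  · exact le_biSup (fun i => MeasurableSpace.comap (X i) _) (by simp : j + 1 ∈ (Set.Iic j)ᶜ)

theorem measureReal_le_reflectedWalk_succ [IsFiniteMeasure μ] (hX : ∀ i, Measurable (X i))
    (hXindep : iIndepFun X μ) (hS0 : ∀ ω, S 0 ω = 0)
    (hS : ∀ j ω, S (j + 1) ω = max (S j ω + X (j + 1) ω) 0) {j : ℕ} {a b : ℤ} (hab : a ≠ b)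
    (hXab : ∀ᵐ ω ∂μ, X (j + 1) ω = a ∨ X (j + 1) ω = b) {x : ℤ} (hx : 1 ≤ x) :
    μ.real {ω | x ≤ S (j + 1) ω} =
      μ.real {ω | x - a ≤ S j ω} * μ.real {ω | X (j + 1) ω = a} +
        μ.real {ω | x - b ≤ S j ω} * μ.real {ω | X (j + 1) ω = b} := by
  simp only [hS]
  exact measureReal_le_max_add_zero (measurable_reflectedWalk hX hS0 hS j) (hX _)
    (indepFun_reflectedWalk_succ hX hXindep hS0 hS j) hab hXab hx

theorem measureReal_le_reflectedWalk_two_step [IsProbabilityMeasure μ] {p q : ℝ} (hp : 0 ≤ p)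
    (hq : 0 ≤ q) (hpq : p + q = 1) (hX : ∀ i, Measurable (X i)) (hXindep : iIndepFun X μ)
    (hXodd : ∀ i : ℕ, Odd i →
      μ {ω | X i ω = 1} = ENNReal.ofReal p ∧ μ {ω | X i ω = 0} = ENNReal.ofReal q)
    (hXeven : ∀ i : ℕ, 1 ≤ i → Even i →
      μ {ω | X i ω = 0} = ENNReal.ofReal p ∧ μ {ω | X i ω = -1} = ENNReal.ofReal q)
    (hS0 : ∀ ω, S 0 ω = 0) (hS : ∀ j ω, S (j + 1) ω = max (S j ω + X (j + 1) ω) 0)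
    (m : ℕ) {x : ℤ} (hx : 0 ≤ x) :
    μ.real {ω | x + 1 ≤ S (2 * m + 2) ω} =
      p ^ 2 * μ.real {ω | x ≤ S (2 * m) ω} + 2 * p * q * μ.real {ω | x + 1 ≤ S (2 * m) ω} +
        q ^ 2 * μ.real {ω | x + 2 ≤ S (2 * m) ω} := by
  have hsum : ENNReal.ofReal p + ENNReal.ofReal q = 1 := by
    rw [← ENNReal.ofReal_add hp hq, hpq, ENNReal.ofReal_one]
  obtain ⟨hA1, hA0⟩ := hXodd (2 * m + 1) (odd_two_mul_add_one m)
  obtain ⟨hB0, hBm⟩ := hXeven (2 * m + 1 + 1) (by omega) ⟨m + 1, by ring⟩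
  have hodd : ∀ y : ℤ, 1 ≤ y → μ.real {ω | y ≤ S (2 * m + 1) ω} =
      μ.real {ω | y - 1 ≤ S (2 * m) ω} * p + μ.real {ω | y ≤ S (2 * m) ω} * q := fun y hy => by
    have hXab := ae_eq_or_eq_of_measure_add_eq_one (hX (2 * m + 1)) one_ne_zero
      (by rw [hA1, hA0, hsum])
    rw [measureReal_le_reflectedWalk_succ hX hXindep hS0 hS one_ne_zero hXab hy]
    simp only [measureReal_def, hA1, hA0, ENNReal.toReal_ofReal hp, ENNReal.toReal_ofReal hq,
      sub_zero]
  have heven : ∀ y : ℤ, 1 ≤ y → μ.real {ω | y ≤ S (2 * m + 2) ω} =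
      μ.real {ω | y ≤ S (2 * m + 1) ω} * p + μ.real {ω | y + 1 ≤ S (2 * m + 1) ω} * q :=
    fun y hy => by
    have hXab := ae_eq_or_eq_of_measure_add_eq_one (hX (2 * m + 1 + 1))
      (by norm_num : (0 : ℤ) ≠ -1) (by rw [hB0, hBm, hsum])
    rw [measureReal_le_reflectedWalk_succ hX hXindep hS0 hS (by norm_num) hXab hy]
    simp only [measureReal_def, hB0, hBm, ENNReal.toReal_ofReal hp, ENNReal.toReal_ofReal hq,
      sub_zero, sub_neg_eq_add]
  rw [heven _ (by omega), hodd _ (by omega), hodd _ (by omega), add_sub_cancel_right,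
    add_sub_cancel_right, add_assoc x 1 1, one_add_one_eq_two]
  ring

end ReflectedWalk

theorem tsum_geometric_pgf {p q z : ℝ} (hpq : |p| < q) (hz : |z| ≤ 1) :
    ∑' x : ℕ, (q - p) * p ^ (2 * x) / q ^ (2 * x + 2) * z ^ x =
      (q - p) / (q ^ 2 - p ^ 2 * z) := by
  have hq : 0 < q := (abs_nonneg p).trans_lt hpq
  have hpz : |p ^ 2 * z| < q ^ 2 :=
    calc |p ^ 2 * z| = |p| ^ 2 * |z| := by rw [abs_mul, abs_pow]
      _ ≤ |p| ^ 2 := mul_le_of_le_one_right (by positivity) hz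
      _ < q ^ 2 := by gcongr
  have hw : |p ^ 2 * z / q ^ 2| < 1 := by
    rwa [abs_div, abs_of_pos (by positivity : (0 : ℝ) < q ^ 2), div_lt_one (by positivity)]
  have hden : q ^ 2 - p ^ 2 * z ≠ 0 := by linarith [le_abs_self (p ^ 2 * z)]
  calc ∑' x : ℕ, (q - p) * p ^ (2 * x) / q ^ (2 * x + 2) * z ^ x
      = ∑' x : ℕ, (q - p) / q ^ 2 * (p ^ 2 * z / q ^ 2) ^ x := by
        congr 1; funext x; rw [pow_add, pow_mul, pow_mul, div_pow, mul_pow]; ring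
    _ = (q - p) / q ^ 2 * (1 - p ^ 2 * z / q ^ 2)⁻¹ := by
        rw [tsum_mul_left, tsum_geometric_of_abs_lt_one hw]
    _ = (q - p) / (q ^ 2 - p ^ 2 * z) := by field_simp

/-- For 0 < p < 1/2 and the ℓ = 1 walk, P(S_{2m} = x) converges to the
geometric law (q-p)p^{2x}/q^{2x+2} (ratio p²/q²), whose probability generating function
is H(z) = (q-p)/(q² - p²z). -/
theorem maxQueue_stationary_distribution_ell_one
    (p q : ℝ) (hp : 0 < p) (hpq : p < 1 / 2) (hq : q = 1 - p)
    {Ω : Type*} [MeasurableSpace Ω] (μ : Measure Ω) [IsProbabilityMeasure μ]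
    (X : ℕ → Ω → ℤ) (hXmeas : ∀ i, Measurable (X i))
    (hXindep : iIndepFun X μ)
    (hXodd : ∀ i : ℕ, Odd i →
      μ {ω | X i ω = 1} = ENNReal.ofReal p ∧ μ {ω | X i ω = 0} = ENNReal.ofReal q)
    (hXeven : ∀ i : ℕ, 1 ≤ i → Even i →
      μ {ω | X i ω = 0} = ENNReal.ofReal p ∧ μ {ω | X i ω = -1} = ENNReal.ofReal q)
    (S : ℕ → Ω → ℤ) (hS0 : ∀ ω, S 0 ω = 0)
    (hS : ∀ (j : ℕ) (ω : Ω), S (j + 1) ω = max (S j ω + X (j + 1) ω) 0) :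
    (∀ x : ℕ,
      Tendsto (fun m : ℕ => (μ {ω | S (2 * m) ω = (x : ℤ)}).toReal) atTop
        (nhds ((q - p) * p ^ (2 * x) / q ^ (2 * x + 2)))) ∧
    (∀ z : ℝ, |z| ≤ 1 →
      ∑' x : ℕ, (q - p) * p ^ (2 * x) / q ^ (2 * x + 2) * z ^ x
        = (q - p) / (q ^ 2 - p ^ 2 * z)) := by
  have hp_lt_q : p < q := by linarith
  have hq0 : 0 < q := by linarith
  have htail : ∀ x : ℕ, Tendsto (fun m => μ.real {ω | (x : ℤ) ≤ S (2 * m) ω}) atTop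
      (𝓝 ((p ^ 2 / q ^ 2) ^ x)) := by
    refine tendsto_tail_pow (b := 2 * p * q) (by positivity) (by positivity)
      (by gcongr) (by rw [hq]; ring) (fun m => ?_) (fun x => ?_) (fun m x => ?_)
    · simp [reflectedWalk_nonneg hS0 hS]
    · simp [hS0, (Int.natCast_nonneg x).not_gt]
    · push_cast
      exact measureReal_le_reflectedWalk_two_step hp.le hq0.le (by rw [hq]; ring) hXmeas hXindep
        hXodd hXeven hS0 hS m (Nat.cast_nonneg x)
  refine ⟨fun x => ?_, fun z => tsum_geometric_pgf (by rwa [abs_of_pos hp])⟩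
  have hqp : q ^ 2 - p ^ 2 = q - p := by rw [hq]; ring
  have hlim : (p ^ 2 / q ^ 2) ^ x - (p ^ 2 / q ^ 2) ^ (x + 1) =
      (q - p) * p ^ (2 * x) / q ^ (2 * x + 2) := by
    rw [← hqp, pow_add q, pow_mul p, pow_mul q, div_pow, pow_succ, div_pow]; field_simp; ring
  rw [← hlim]
  refine ((htail x).sub (htail (x + 1))).congr fun m => ?_
  rw [← measureReal_def,
    measureReal_eq_sub_measureReal_le (measurable_reflectedWalk hXmeas hS0 hS _), Nat.cast_succ]
end
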